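/- arXiv:2301.12977 — 5 statements merged into one kernel-verified Lean document; each statement's English description precedes it below -/
import Mathlib

section
/- Let 𝓘 = (V,𝒞) be an ℓ-minimal, non-trivial, p₁,m-closed CSP instance over H such that proj_{(u,v)}(𝓘) ∩ I₂ ≠ ∅ for all distinct u,v ∈ V. Let S ⊆ [V]^ℓ be such that for every v ∈ S, proj_v(𝓘) contains some injective Aut(ℍ)-orbit and contains no non-deterministic orbit. If 𝓘 has a solution, then the injective finitisation of 𝓘 on S has a solution. -/
open scoped Classical

/-- A constraint of a CSP instance: a scope (a finite set of variables) together with a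
set of assignments.  Assignments are recorded as total functions on the variables, of which
only the values on the scope are relevant. -/
structure Constraint (V : Type*) (A : Type*) where
  scope : Finset V
  maps : Set (V → A)

/-- A CSP instance: a finite list of constraints. -/
structure CSPInstance (V : Type*) (A : Type*) where
  constraints : List (Constraint V A)

section CSP

variable {V : Type*} {A : Type*}

/-- Projection of a constraint to a tuple of variables. -/
def Constraint.proj {k : ℕ} (C : Constraint V A) (t : Fin k → V) : Set (Fin k → A) :=
  (fun g => g ∘ t) '' C.maps

/-- Projection of a constraint to a single variable. -/
def Constraint.proj1 (C : Constraint V A) (x : V) : Set A :=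
  (fun g => g x) '' C.maps

/-- A solution of a CSP instance. -/
def CSPInstance.IsSolution (I : CSPInstance V A) (f : V → A) : Prop :=
  ∀ C ∈ I.constraints, ∃ g ∈ C.maps, ∀ x ∈ C.scope, f x = g x

/-- A CSP instance is trivial if some constraint is empty. -/
def CSPInstance.Trivial (I : CSPInstance V A) : Prop :=
  ∃ C ∈ I.constraints, C.maps = ∅

/-- A CSP instance is non-trivial if no constraint is empty. -/
def CSPInstance.NonTrivial (I : CSPInstance V A) : Prop :=
  ∀ C ∈ I.constraints, C.maps.Nonempty

/-- Projection of an instance to a tuple of variables (for minimal instances the projections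
of the individual constraints all agree). -/
def CSPInstance.proj {k : ℕ} (I : CSPInstance V A) (t : Fin k → V) : Set (Fin k → A) :=
  { a | ∃ C ∈ I.constraints, (∀ i, t i ∈ C.scope) ∧ a ∈ C.proj t }

/-- Projection of an instance to a single variable. -/
def CSPInstance.proj1 (I : CSPInstance V A) (x : V) : Set A :=
  { b | ∃ C ∈ I.constraints, x ∈ C.scope ∧ b ∈ C.proj1 x }

/-- Projection of an instance to a pair of tuples of variables. -/
def CSPInstance.pairProj {k : ℕ} (I : CSPInstance V A) (t₁ t₂ : Fin k → V) :
    Set ((Fin k → A) × (Fin k → A)) :=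
  { p | ∃ C ∈ I.constraints, (∀ i, t₁ i ∈ C.scope) ∧ (∀ i, t₂ i ∈ C.scope) ∧
      ∃ f ∈ C.maps, f ∘ t₁ = p.1 ∧ f ∘ t₂ = p.2 }

/-- The projections of any two constraints to a common tuple of at most `m` variables agree. -/
def ProjConsistent (m : ℕ) (I : CSPInstance V A) : Prop :=
  ∀ (k : ℕ), k ≤ m → ∀ t : Fin k → V, ∀ C ∈ I.constraints, ∀ C' ∈ I.constraints,
    (∀ i, t i ∈ C.scope) → (∀ i, t i ∈ C'.scope) → C.proj t = C'.proj t

/-- `(m,n)`-minimality of a CSP instance. -/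
def MNMinimal (m n : ℕ) (I : CSPInstance V A) : Prop :=
  (∀ C ∈ I.constraints, C.scope.card ≤ n) ∧
  (∀ W : Finset V, W.card ≤ m → ∃ C ∈ I.constraints, W ⊆ C.scope) ∧
  ProjConsistent m I

/-- `ℓ`-minimality of a CSP instance. -/
def LMinimal (ℓ : ℕ) (I : CSPInstance V A) : Prop :=
  (∀ W : Finset V, W.card ≤ ℓ → ∃ C ∈ I.constraints, W ⊆ C.scope) ∧
  ProjConsistent ℓ I

/-- A set of assignments is preserved by a binary operation, applied componentwise. -/
def Preserves2 {X : Type*} (p : A → A → A) (Q : Set (X → A)) : Prop :=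
  ∀ f ∈ Q, ∀ g ∈ Q, (fun x => p (f x) (g x)) ∈ Q

/-- A set of assignments is preserved by a ternary operation, applied componentwise. -/
def Preserves3 {X : Type*} (p : A → A → A → A) (Q : Set (X → A)) : Prop :=
  ∀ f ∈ Q, ∀ g ∈ Q, ∀ h ∈ Q, (fun x => p (f x) (g x) (h x)) ∈ Q

/-- A set of assignments is preserved by a `k`-ary operation, applied componentwise. -/
def PreservesK {X : Type*} {k : ℕ} (p : (Fin k → A) → A) (Q : Set (X → A)) : Prop :=
  ∀ rows : Fin k → (X → A), (∀ j, rows j ∈ Q) → (fun x => p (fun j => rows j x)) ∈ Q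

/-- `vs, Cs` is a path in the instance `I`. -/
def IsPath (I : CSPInstance V A) {k : ℕ} (vs : Fin (k+1) → V)
    (Cs : Fin k → Constraint V A) : Prop :=
  ∀ i : Fin k, Cs i ∈ I.constraints ∧ vs i.castSucc ∈ (Cs i).scope ∧ vs i.succ ∈ (Cs i).scope

/-- The path `vs, Cs` connects `a` to `b`. -/
def PathConnects {k : ℕ} (vs : Fin (k+1) → V) (Cs : Fin k → Constraint V A)
    (a b : A) : Prop :=
  ∃ c : Fin (k+1) → A, c 0 = a ∧ c (Fin.last k) = b ∧
    ∀ i : Fin k, ∃ f ∈ (Cs i).maps, f (vs i.castSucc) = c i.castSucc ∧ f (vs i.succ) = c i.succ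

/-- `a` and `b` are linked at the variable `x` (the linkedness congruence): some path from `x`
to `x` connects `a` to `b`. -/
def Linked (I : CSPInstance V A) (x : V) (a b : A) : Prop :=
  ∃ (k : ℕ) (vs : Fin (k+1) → V) (Cs : Fin k → Constraint V A),
    1 ≤ k ∧ IsPath I vs Cs ∧ vs 0 = x ∧ vs (Fin.last k) = x ∧ PathConnects vs Cs a b

/-- The instance `I_eq`: each constraint is closed under the full symmetric group. -/
def CSPInstance.eqClosure (I : CSPInstance V A) : CSPInstance V A :=
  ⟨I.constraints.map (fun C =>
    ⟨C.scope, { g | ∃ f ∈ C.maps, ∃ α : Equiv.Perm A, g = ⇑α ∘ f }⟩)⟩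

/-- The instance `I^{t ∈ P}`: every constraint whose scope contains all variables of the
tuple `t` is restricted to the assignments sending `t` into `P`. -/
noncomputable def CSPInstance.restrictTuple {k : ℕ} (I : CSPInstance V A) (t : Fin k → V)
    (P : Set (Fin k → A)) : CSPInstance V A :=
  ⟨I.constraints.map (fun C =>
    if (∀ i, t i ∈ C.scope) then ⟨C.scope, { g ∈ C.maps | (g ∘ t) ∈ P }⟩ else C)⟩

/-- The restriction of an instance to a set `S` of its variables. -/
noncomputable def CSPInstance.restrictVars (I : CSPInstance V A) (S : Set V) :
    CSPInstance V A :=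
  ⟨I.constraints.map (fun C => ⟨C.scope.filter (· ∈ S), C.maps⟩)⟩

/-- `K` refines `L`: the constraints correspond to each other, with equal scopes and smaller
sets of assignments. -/
def Refines (K L : CSPInstance V A) : Prop :=
  List.Forall₂ (fun D C => D.scope = C.scope ∧ D.maps ⊆ C.maps) K.constraints L.constraints

/-- `K` is the `(m,n)`-minimal instance equivalent to `I`: the inclusion-largest family of
subsets of the constraints of `I` whose projections to common tuples of at most `m` variables
agree. -/
def IsMNMinimalEquiv (m : ℕ) (K I : CSPInstance V A) : Prop :=
  Refines K I ∧ ProjConsistent m K ∧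
  ∀ L : CSPInstance V A, Refines L I → ProjConsistent m L → Refines L K

end CSP

section Hypergraph

variable {H : Type*} {ℓ : ℕ}

/-- `α` is an automorphism of the hypergraph `(H, R)`. -/
def IsAut (R : Set (Fin ℓ → H)) (α : Equiv.Perm H) : Prop :=
  ∀ t : Fin ℓ → H, (⇑α ∘ t ∈ R ↔ t ∈ R)

/-- `α` is an automorphism of the ordered hypergraph `(H, R, <)`. -/
def IsAutOrd [LinearOrder H] (R : Set (Fin ℓ → H)) (α : Equiv.Perm H) : Prop :=
  IsAut R α ∧ StrictMono ⇑α

/-- The orbit of a `q`-tuple under `Aut(H, R)`. -/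
def orbitOf (R : Set (Fin ℓ → H)) {q : ℕ} (a : Fin q → H) : Set (Fin q → H) :=
  { b | ∃ α : Equiv.Perm H, IsAut R α ∧ ⇑α ∘ a = b }

/-- The orbit of a `q`-tuple under `Aut(H, R, <)`. -/
def orbitOrdOf [LinearOrder H] (R : Set (Fin ℓ → H)) {q : ℕ} (a : Fin q → H) :
    Set (Fin q → H) :=
  { b | ∃ α : Equiv.Perm H, IsAutOrd R α ∧ ⇑α ∘ a = b }

/-- The orbit `E` of injective `ℓ`-tuples in `R`. -/
def ESet (R : Set (Fin ℓ → H)) : Set (Fin ℓ → H) :=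
  { a | Function.Injective a ∧ a ∈ R }

/-- The orbit `N` of injective `ℓ`-tuples not in `R`. -/
def NSet (R : Set (Fin ℓ → H)) : Set (Fin ℓ → H) :=
  { a | Function.Injective a ∧ a ∉ R }

/-- `O` is the orbit of a non-injective `ℓ`-tuple. -/
def IsNonInjOrbit (R : Set (Fin ℓ → H)) (O : Set (Fin ℓ → H)) : Prop :=
  ∃ a : Fin ℓ → H, ¬ Function.Injective a ∧ O = orbitOf R a

/-- A binary operation is canonical with respect to `(H, R, <)`. -/
def Canonical2 [LinearOrder H] (R : Set (Fin ℓ → H)) (p : H → H → H) : Prop :=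
  ∀ (q : ℕ) (a₁ a₂ b₁ b₂ : Fin q → H), b₁ ∈ orbitOrdOf R a₁ → b₂ ∈ orbitOrdOf R a₂ →
    (fun i => p (b₁ i) (b₂ i)) ∈ orbitOrdOf R (fun i => p (a₁ i) (a₂ i))

/-- A ternary operation is canonical with respect to `(H, R, <)`. -/
def Canonical3 [LinearOrder H] (R : Set (Fin ℓ → H)) (p : H → H → H → H) : Prop :=
  ∀ (q : ℕ) (a₁ a₂ a₃ b₁ b₂ b₃ : Fin q → H),
    b₁ ∈ orbitOrdOf R a₁ → b₂ ∈ orbitOrdOf R a₂ → b₃ ∈ orbitOrdOf R a₃ →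
    (fun i => p (b₁ i) (b₂ i) (b₃ i)) ∈ orbitOrdOf R (fun i => p (a₁ i) (a₂ i) (a₃ i))

/-- The assumed properties of the binary injection `p₁`: it is injective, canonical with
respect to `(H, R, <)`, acts as the first projection on `{E, N}`, and acts lexicographically
on the order. -/
structure P1Props [LinearOrder H] (R : Set (Fin ℓ → H)) (p₁ : H → H → H) : Prop where
  inj : Function.Injective (fun x : H × H => p₁ x.1 x.2)
  canonical : Canonical2 R p₁
  firstProj : ∀ a b : Fin ℓ → H, Function.Injective a → Function.Injective b →
    (fun i => p₁ (a i) (b i)) ∈ orbitOf R a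
  lex : ∀ x y x' y' : H, (y < y' ∨ (y = y' ∧ x < x')) → p₁ x y < p₁ x' y'

/-- The assumed properties of the ternary injection `m`: it is injective, canonical with
respect to `(H, R, <)`, and acts as a minority on `{E, N}`. -/
structure MProps [LinearOrder H] (R : Set (Fin ℓ → H)) (m : H → H → H → H) : Prop where
  inj : Function.Injective (fun x : H × H × H => m x.1 x.2.1 x.2.2)
  canonical : Canonical3 R m
  minority : ∀ a b : Fin ℓ → H, Function.Injective a → Function.Injective b →
    (fun i => m (a i) (a i) (b i)) ∈ orbitOf R b ∧
    (fun i => m (a i) (b i) (a i)) ∈ orbitOf R b ∧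
    (fun i => m (b i) (a i) (a i)) ∈ orbitOf R b

/-- The ambient assumptions on the ordered `ℓ`-hypergraph `(H, R, <)`. -/
structure HContext (H : Type*) [LinearOrder H] (ℓ : ℕ) (R : Set (Fin ℓ → H)) : Prop where
  three_le : 3 ≤ ℓ
  countable : Countable H
  infinite : Infinite H
  R_inj : ∀ a ∈ R, Function.Injective a
  R_symm : ∀ σ : Equiv.Perm (Fin ℓ), ∀ a ∈ R, (a ∘ ⇑σ) ∈ R
  E_nonempty : (ESet R).Nonempty
  N_nonempty : (NSet R).Nonempty
  orbit_E : ∀ a b : Fin ℓ → H, a ∈ ESet R → b ∈ ESet R → b ∈ orbitOf R a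
  orbit_N : ∀ a b : Fin ℓ → H, a ∈ NSet R → b ∈ NSet R → b ∈ orbitOf R a
  inc_order : ∀ (q : ℕ) (a : Fin q → H), Function.Injective a →
    ∃ α : Equiv.Perm H, IsAut R α ∧ StrictMono (⇑α ∘ a)
  oligo : ∀ q : ℕ, { O : Set (Fin q → H) | ∃ a : Fin q → H, O = orbitOrdOf R a }.Finite

/-- Homogeneity of `(H, R)`. -/
def Homogeneous (R : Set (Fin ℓ → H)) : Prop :=
  ∀ (s : Finset H) (e : H → H), Set.InjOn e ↑s →
    (∀ t : Fin ℓ → H, (∀ i, t i ∈ s) → (t ∈ R ↔ (e ∘ t) ∈ R)) →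
    ∃ α : Equiv.Perm H, IsAut R α ∧ ∀ x ∈ s, α x = e x

/-- Homogeneity of `(H, R, <)`. -/
def HomogeneousOrd [LinearOrder H] (R : Set (Fin ℓ → H)) : Prop :=
  ∀ (s : Finset H) (e : H → H), Set.InjOn e ↑s →
    (∀ x ∈ s, ∀ y ∈ s, x < y → e x < e y) →
    (∀ t : Fin ℓ → H, (∀ i, t i ∈ s) → (t ∈ R ↔ (e ∘ t) ∈ R)) →
    ∃ α : Equiv.Perm H, IsAutOrd R α ∧ ∀ x ∈ s, α x = e x

/-- The age of `(H, R)` is finitely bounded with bound `b`: a finite `ℓ`-hypergraph embeds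
into `(H, R)` iff each of its induced substructures on at most `b` vertices embeds. -/
def FinBounded (b : ℕ) (R : Set (Fin ℓ → H)) : Prop :=
  ∀ (q : ℕ) (Q : Set (Fin ℓ → Fin q)),
    (∀ t ∈ Q, Function.Injective t) →
    (∀ σ : Equiv.Perm (Fin ℓ), ∀ t ∈ Q, (t ∘ ⇑σ) ∈ Q) →
    ((∀ s : Finset (Fin q), s.card ≤ b →
        ∃ e : Fin q → H, Set.InjOn e ↑s ∧
          ∀ t : Fin ℓ → Fin q, (∀ i, t i ∈ s) → (t ∈ Q ↔ (e ∘ t) ∈ R)) ↔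
      ∃ e : Fin q → H, Function.Injective e ∧ ∀ t : Fin ℓ → Fin q, (t ∈ Q ↔ (e ∘ t) ∈ R))

/-- The tuple `a` lies in a deterministic orbit: there is an automorphism `α` such that
`p₁(O_<(α a), O_<(e)) = p₁(O_<(α a), O_<(n))` for increasing representatives `e ∈ E`,
`n ∈ N`. -/
def DeterministicAt [LinearOrder H] (R : Set (Fin ℓ → H)) (p₁ : H → H → H)
    (a : Fin ℓ → H) : Prop :=
  ∃ α : Equiv.Perm H, IsAut R α ∧
    ∀ e n : Fin ℓ → H, e ∈ ESet R → n ∈ NSet R → StrictMono e → StrictMono n →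
      (fun i => p₁ (α (a i)) (n i)) ∈ orbitOrdOf R (fun i => p₁ (α (a i)) (e i))

/-- `O` is a deterministic (non-injective) orbit. -/
def IsDeterministicOrbit [LinearOrder H] (R : Set (Fin ℓ → H)) (p₁ : H → H → H)
    (O : Set (Fin ℓ → H)) : Prop :=
  IsNonInjOrbit R O ∧ ∀ a ∈ O, DeterministicAt R p₁ a

/-- `O` is a non-deterministic (non-injective) orbit. -/
def IsNonDeterministicOrbit [LinearOrder H] (R : Set (Fin ℓ → H)) (p₁ : H → H → H)
    (O : Set (Fin ℓ → H)) : Prop :=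
  IsNonInjOrbit R O ∧ ¬ ∀ a ∈ O, DeterministicAt R p₁ a

/-- A constraint over `H` is invariant under `Aut(H, R)`. -/
def Constraint.AutInvariant {V : Type*} (R : Set (Fin ℓ → H)) (C : Constraint V H) : Prop :=
  ∀ f ∈ C.maps, ∀ α : Equiv.Perm H, IsAut R α → (⇑α ∘ f) ∈ C.maps

/-- An instance over `H` is `p₁,m`-closed: every constraint is `Aut(H,R)`-invariant and
preserved by `p₁` and by `m`. -/
def PMClosed {V : Type*} (R : Set (Fin ℓ → H)) (p₁ : H → H → H) (m : H → H → H → H)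
    (I : CSPInstance V H) : Prop :=
  ∀ C ∈ I.constraints, C.AutInvariant R ∧ Preserves2 p₁ C.maps ∧ Preserves3 m C.maps

/-- The increasing injective `ℓ`-tuples of variables. -/
abbrev IncTup (V : Type*) [LinearOrder V] (ℓ : ℕ) := { t : Fin ℓ → V // StrictMono t }

/-- The finitisation of a constraint: a constraint over the set of orbits of `ℓ`-tuples
(coded as the sets of tuples that are orbits), with the increasing `ℓ`-tuples of scope
variables as its scope. -/
noncomputable def Constraint.finitise {V : Type*} [LinearOrder V] [Fintype V]
    (R : Set (Fin ℓ → H)) (C : Constraint V H) :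
    Constraint (IncTup V ℓ) (Set (Fin ℓ → H)) where
  scope := Finset.univ.filter (fun t : IncTup V ℓ => ∀ i, t.1 i ∈ C.scope)
  maps := { g | (∀ t : IncTup V ℓ, (∀ i, t.1 i ∈ C.scope) → ∃ a : Fin ℓ → H, g t = orbitOf R a) ∧
      ∃ f ∈ C.maps, ∀ t : IncTup V ℓ, (∀ i, t.1 i ∈ C.scope) → (f ∘ t.1) ∈ g t }

/-- The finitisation of an instance. -/
noncomputable def CSPInstance.finitise {V : Type*} [LinearOrder V] [Fintype V]
    (R : Set (Fin ℓ → H)) (I : CSPInstance V H) :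
    CSPInstance (IncTup V ℓ) (Set (Fin ℓ → H)) :=
  ⟨I.constraints.map (Constraint.finitise R)⟩

/-- The injectivisation of an instance over the orbits of `ℓ`-tuples: all assignments taking
a value outside the two injective orbits `E`, `N` are removed from every constraint. -/
def CSPInstance.injectivise {W : Type*} (R : Set (Fin ℓ → H))
    (J : CSPInstance W (Set (Fin ℓ → H))) : CSPInstance W (Set (Fin ℓ → H)) :=
  ⟨J.constraints.map (fun C =>
    ⟨C.scope, { g ∈ C.maps | ∀ w ∈ C.scope, g w = ESet R ∨ g w = NSet R }⟩)⟩

/-- The injective finitisation of an instance `I` on a set `S` of increasing `ℓ`-tuples of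
variables: the restriction to `S` of the injectivisation of the finitisation of `I`. -/
noncomputable def injFinitisation {V : Type*} [LinearOrder V] [Fintype V]
    (R : Set (Fin ℓ → H)) (I : CSPInstance V H) (S : Set (IncTup V ℓ)) :
    CSPInstance (IncTup V ℓ) (Set (Fin ℓ → H)) :=
  ((I.finitise R).injectivise R).restrictVars S

/-- An `ℓ`-minimal instance is eq-subdirect: for every increasing tuple `t` of variables and
every non-injective orbit `O ⊆ proj_t(I)`, the instance `(I^{t ∈ O})_eq` has a solution. -/
def EqSubdirect {V : Type*} [LinearOrder V] (R : Set (Fin ℓ → H))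
    (I : CSPInstance V H) : Prop :=
  ∀ t : Fin ℓ → V, StrictMono t → ∀ O : Set (Fin ℓ → H), IsNonInjOrbit R O →
    O ⊆ I.proj t → ∃ f : V → H, ((I.restrictTuple t O).eqClosure).IsSolution f

/-- Inj-irreducibility of a non-trivial `ℓ`-minimal instance. -/
def InjIrreducible {V : Type*} [LinearOrder V] [Fintype V] [LinearOrder H]
    (R : Set (Fin ℓ → H)) (p₁ : H → H → H) (I : CSPInstance V H) : Prop :=
  I.NonTrivial ∧ LMinimal ℓ I ∧
  ∀ S : Set (IncTup V ℓ),
    (∃ g, ((((I.finitise R).restrictVars S)).injectivise R).IsSolution g) ∨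
    (∃ t ∈ S, ESet R ∈ ((I.finitise R).restrictVars S).proj1 t ∧
      NSet R ∈ ((I.finitise R).restrictVars S).proj1 t ∧
      ¬ Linked ((I.finitise R).restrictVars S) t (ESet R) (NSet R)) ∨
    (∃ t ∈ S, ∃ O P : Set (Fin ℓ → H), (O = ESet R ∨ O = NSet R) ∧
      IsNonDeterministicOrbit R p₁ P ∧
      Linked ((I.finitise R).restrictVars S) t O P)

/-- The value in `ℤ₂` attached to an (injective) `ℓ`-tuple: `E` is identified with `1` and
`N` with `0`. -/
noncomputable def orbVal (R : Set (Fin ℓ → H)) (a : Fin ℓ → H) : ZMod 2 :=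
  if a ∈ R then 1 else 0

/-- The injective finitisation of a single constraint, coded over `ℤ₂`: the set of maps `g`
from increasing `ℓ`-tuples of scope variables to `ℤ₂ = {E, N}` arising from assignments in
`C` that are injective on every such tuple. -/
noncomputable def injFinMaps {V : Type*} [LinearOrder V] (R : Set (Fin ℓ → H))
    (C : Constraint V H) : Set ((Fin ℓ → V) → ZMod 2) :=
  { g | ∃ f ∈ C.maps, ∀ t : Fin ℓ → V, StrictMono t → (∀ i, t i ∈ C.scope) →
      Function.Injective (f ∘ t) ∧ orbVal R (f ∘ t) = g t }

end Hypergraph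

section RelStruct

/-- A relational structure on a domain `A`. -/
structure RelStruct (A : Type*) where
  ι : Type
  ar : ι → ℕ
  rel : ∀ i : ι, Set (Fin (ar i) → A)

variable {A : Type*}

/-- A `k`-ary polymorphism of a relational structure. -/
def IsPolymorphism (S : RelStruct A) {k : ℕ} (g : (Fin k → A) → A) : Prop :=
  ∀ (i : S.ι) (rows : Fin k → (Fin (S.ar i) → A)),
    (∀ j, rows j ∈ S.rel i) → (fun x => g (fun j => rows j x)) ∈ S.rel i

/-- A binary polymorphism of a relational structure. -/
def IsPolymorphism2 (S : RelStruct A) (f : A → A → A) : Prop :=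
  ∀ (i : S.ι), ∀ s ∈ S.rel i, ∀ t ∈ S.rel i, (fun x => f (s x) (t x)) ∈ S.rel i

/-- An automorphism of a relational structure. -/
def IsAutomorphismS (S : RelStruct A) (α : Equiv.Perm A) : Prop :=
  ∀ (i : S.ι) (t : Fin (S.ar i) → A), (⇑α ∘ t) ∈ S.rel i ↔ t ∈ S.rel i

/-- A relation preserved by every polymorphism of the structure. -/
def PolInvariantRel (S : RelStruct A) {q : ℕ} (Q : Set (Fin q → A)) : Prop :=
  ∀ (k : ℕ) (g : (Fin k → A) → A), IsPolymorphism S g →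
    ∀ rows : Fin k → (Fin q → A), (∀ j, rows j ∈ Q) → (fun x => g (fun j => rows j x)) ∈ Q

/-- A relation invariant under every automorphism of the structure. -/
def AutInvariantRel (S : RelStruct A) {q : ℕ} (Q : Set (Fin q → A)) : Prop :=
  ∀ α : Equiv.Perm A, IsAutomorphismS S α → ∀ t ∈ Q, (⇑α ∘ t) ∈ Q

/-- A constraint preserved by every polymorphism of the structure. -/
def ConstraintPolInv {V : Type*} (S : RelStruct A) (C : Constraint V A) : Prop :=
  ∀ (k : ℕ) (g : (Fin k → A) → A), IsPolymorphism S g →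
    ∀ rows : Fin k → (V → A), (∀ j, rows j ∈ C.maps) → (fun x => g (fun j => rows j x)) ∈ C.maps

/-- A constraint invariant under every automorphism of the structure. -/
def ConstraintAutInvS {V : Type*} (S : RelStruct A) (C : Constraint V A) : Prop :=
  ∀ α : Equiv.Perm A, IsAutomorphismS S α → ∀ f ∈ C.maps, (⇑α ∘ f) ∈ C.maps

/-- `B` is a binary absorbing subuniverse of `R₀` in the structure `S`, written `B ◁ R₀`. -/
def BinAbsorbs (S : RelStruct A) {k : ℕ} (B R₀ : Set (Fin k → A)) : Prop :=
  ∃ f : A → A → A, IsPolymorphism2 S f ∧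
    ∀ a ∈ R₀, ∀ b ∈ B, (fun x => f (a x) (b x)) ∈ B ∧ (fun x => f (b x) (a x)) ∈ B

/-- The automorphism group of the structure is oligomorphic. -/
def OligomorphicS (S : RelStruct A) : Prop :=
  ∀ q : ℕ, { O : Set (Fin q → A) | ∃ t : Fin q → A,
    O = { s | ∃ α : Equiv.Perm A, IsAutomorphismS S α ∧ ⇑α ∘ t = s } }.Finite

/-- The instance obtained by adding, for every `k`-tuple `t` of variables such that
`S₀ ∩ proj_t(I)` is a binary absorbing subuniverse of `R₀`, the constraint forcing `t`
into `S₀`. -/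
noncomputable def addAbsorbConstraints {V : Type*} [Fintype V] {k : ℕ}
    (I : CSPInstance V A) (S₀ R₀ : Set (Fin k → A)) (S : RelStruct A) : CSPInstance V A :=
  ⟨I.constraints ++ ((Finset.univ.filter (fun t : Fin k → V =>
      I.proj t ⊆ R₀ ∧ (S₀ ∩ I.proj t).Nonempty ∧ BinAbsorbs S (S₀ ∩ I.proj t) R₀)).toList.map
    (fun t => ⟨Finset.univ.image t, { c : V → A | (c ∘ t) ∈ S₀ }⟩))⟩

end RelStruct

section Statement3Helpers

variable {H : Type*} [LinearOrder H] {ℓ : ℕ} {R : Set (Fin ℓ → H)} {p₁ : H → H → H}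

lemma isAut_one : IsAut R (1 : Equiv.Perm H) := by
  intro t
  have : ⇑(1 : Equiv.Perm H) ∘ t = t := by funext i; rfl
  rw [this]

lemma isAut_mul {α β : Equiv.Perm H} (hα : IsAut R α) (hβ : IsAut R β) :
    IsAut R (α * β) := by
  intro t
  have h1 : ⇑(α * β) ∘ t = ⇑α ∘ (⇑β ∘ t) := by funext i; rfl
  rw [h1]
  exact (hα (⇑β ∘ t)).trans (hβ t)

lemma isAut_inv {α : Equiv.Perm H} (hα : IsAut R α) : IsAut R α⁻¹ := by
  intro t
  have h1 := hα (⇑α⁻¹ ∘ t)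
  have h2 : ⇑α ∘ (⇑α⁻¹ ∘ t) = t := by
    funext i
    exact α.apply_symm_apply (t i)
  rw [h2] at h1
  exact h1.symm

lemma strictMono_perm_inv {α : Equiv.Perm H} (h : StrictMono ⇑α) :
    StrictMono ⇑α⁻¹ := by
  intro x y hxy
  by_contra hc
  have hle : α⁻¹ y ≤ α⁻¹ x := not_lt.mp hc
  have := h.le_iff_le.mpr hle
  rw [Equiv.Perm.inv_def, α.apply_symm_apply, α.apply_symm_apply] at this
  exact absurd hxy (not_lt.mpr this)

lemma ordO_refl (a : Fin ℓ → H) : a ∈ orbitOrdOf R a :=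
  ⟨1, ⟨isAut_one, fun _ _ h => h⟩, by funext i; rfl⟩

lemma ordO_symm {a b : Fin ℓ → H} (h : b ∈ orbitOrdOf R a) : a ∈ orbitOrdOf R b := by
  obtain ⟨γ, ⟨hAut, hMono⟩, hEq⟩ := h
  refine ⟨γ⁻¹, ⟨isAut_inv hAut, strictMono_perm_inv hMono⟩, ?_⟩
  funext i
  have : b i = γ (a i) := by rw [← hEq]; rfl
  simp only [Function.comp_apply, this]
  exact γ.symm_apply_apply (a i)

lemma ordO_trans {a b c : Fin ℓ → H} (h1 : b ∈ orbitOrdOf R a) (h2 : c ∈ orbitOrdOf R b) :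
    c ∈ orbitOrdOf R a := by
  obtain ⟨γ, ⟨hAut, hMono⟩, rfl⟩ := h1
  obtain ⟨δ, ⟨hAut', hMono'⟩, rfl⟩ := h2
  refine ⟨δ * γ, ⟨isAut_mul hAut' hAut, ?_⟩, ?_⟩
  · intro x y hxy
    exact hMono' (hMono hxy)
  · funext i; rfl

lemma ordO_mem_orbit {a b : Fin ℓ → H} (h : b ∈ orbitOrdOf R a) : b ∈ orbitOf R a := by
  obtain ⟨γ, hγ, hEq⟩ := h
  exact ⟨γ, hγ.1, hEq⟩

/-- The class of an injective tuple: `E` if it is in `R`, `N` otherwise. -/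
noncomputable def cls (R : Set (Fin ℓ → H)) (x : Fin ℓ → H) : Set (Fin ℓ → H) :=
  if x ∈ R then ESet R else NSet R

lemma cls_self {x : Fin ℓ → H} (hx : Function.Injective x) : x ∈ cls R x := by
  unfold cls
  split_ifs with h
  · exact ⟨hx, h⟩
  · exact ⟨hx, h⟩

lemma cls_or (x : Fin ℓ → H) : cls R x = ESet R ∨ cls R x = NSet R := by
  unfold cls
  split_ifs
  · exact Or.inl rfl
  · exact Or.inr rfl

lemma cls_of_orbit {a b : Fin ℓ → H} (h : b ∈ orbitOf R a) : cls R b = cls R a := by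
  obtain ⟨γ, hγ, rfl⟩ := h
  unfold cls
  by_cases hR : a ∈ R
  · rw [if_pos hR, if_pos ((hγ a).mpr hR)]
  · rw [if_neg hR, if_neg (fun hc => hR ((hγ a).mp hc))]

lemma cls_of_ordO {a b : Fin ℓ → H} (h : b ∈ orbitOrdOf R a) : cls R b = cls R a :=
  cls_of_orbit (ordO_mem_orbit h)

lemma cls_eq_orbitOf (ctx : HContext H ℓ R) {x : Fin ℓ → H} (hx : Function.Injective x) :
    cls R x = orbitOf R x := by
  unfold cls
  split_ifs with h
  · ext b
    constructor
    · intro hb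
      exact ctx.orbit_E x b ⟨hx, h⟩ hb
    · rintro ⟨γ, hγ, rfl⟩
      exact ⟨γ.injective.comp hx, (hγ x).mpr h⟩
  · ext b
    constructor
    · intro hb
      exact ctx.orbit_N x b ⟨hx, h⟩ hb
    · rintro ⟨γ, hγ, rfl⟩
      exact ⟨γ.injective.comp hx, fun hc => h ((hγ x).mp hc)⟩

/-- A stack of `p₁`-layers applied over a base tuple. -/
def pstack (p₁ : H → H → H) (as : List (Fin ℓ → H)) (b : Fin ℓ → H) : Fin ℓ → H :=
  as.foldr (fun a acc => fun i => p₁ (a i) (acc i)) b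

@[simp] lemma pstack_nil (b : Fin ℓ → H) : pstack p₁ [] b = b := rfl

@[simp] lemma pstack_cons (a : Fin ℓ → H) (as : List (Fin ℓ → H)) (b : Fin ℓ → H) :
    pstack p₁ (a :: as) b = fun i => p₁ (a i) (pstack p₁ as b i) := rfl

lemma pstack_append (as₁ as₂ : List (Fin ℓ → H)) (b : Fin ℓ → H) :
    pstack p₁ (as₁ ++ as₂) b = pstack p₁ as₁ (pstack p₁ as₂ b) := by
  unfold pstack
  rw [List.foldr_append]

lemma pstack_mono (hp : P1Props R p₁) (as : List (Fin ℓ → H)) {b : Fin ℓ → H}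
    (hb : StrictMono b) : StrictMono (pstack p₁ as b) := by
  induction as with
  | nil => simpa
  | cons a as ih =>
    simp only [pstack_cons]
    intro i j hij
    exact hp.lex _ _ _ _ (Or.inl (ih hij))

lemma pstack_ordO (hp : P1Props R p₁) (as : List (Fin ℓ → H)) {z z' : Fin ℓ → H}
    (h : z ∈ orbitOrdOf R z') : pstack p₁ as z ∈ orbitOrdOf R (pstack p₁ as z') := by
  induction as with
  | nil => simpa
  | cons a as ih =>
    simp only [pstack_cons]
    exact hp.canonical ℓ a (pstack p₁ as z') a (pstack p₁ as z) (ordO_refl a) ih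

/-- `y` behaves deterministically as a first argument of `p₁`. -/
def GoodTup (R : Set (Fin ℓ → H)) (p₁ : H → H → H) (y : Fin ℓ → H) : Prop :=
  ∀ e n : Fin ℓ → H, e ∈ ESet R → n ∈ NSet R → StrictMono e → StrictMono n →
    (fun i => p₁ (y i) (n i)) ∈ orbitOrdOf R (fun i => p₁ (y i) (e i))

lemma good_collapse (hy : GoodTup R p₁ y) {w w' : Fin ℓ → H}
    (hw : StrictMono w) (hw' : StrictMono w')
    {e₀ n₀ : Fin ℓ → H} (he₀ : e₀ ∈ ESet R) (hn₀ : n₀ ∈ NSet R)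
    (he₀m : StrictMono e₀) (hn₀m : StrictMono n₀) :
    (fun i => p₁ (y i) (w i)) ∈ orbitOrdOf R (fun i => p₁ (y i) (w' i)) := by
  by_cases hwR : w ∈ R <;> by_cases hw'R : w' ∈ R
  · -- both in E
    have h1 := hy w' n₀ ⟨hw'.injective, hw'R⟩ hn₀ hw' hn₀m
    have h2 := ordO_symm (hy w n₀ ⟨hw.injective, hwR⟩ hn₀ hw hn₀m)
    exact ordO_trans h1 h2
  · -- w ∈ E, w' ∉ R
    exact ordO_symm (hy w w' ⟨hw.injective, hwR⟩ ⟨hw'.injective, hw'R⟩ hw hw')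
  · -- w ∉ R, w' ∈ E
    exact hy w' w ⟨hw'.injective, hw'R⟩ ⟨hw.injective, hwR⟩ hw' hw
  · -- both in N
    have h1 := hy e₀ w he₀ ⟨hw.injective, hwR⟩ he₀m hw
    have h2 := ordO_symm (hy e₀ w' he₀ ⟨hw'.injective, hw'R⟩ he₀m hw')
    exact ordO_trans h2 h1

lemma pstack_key (hp : P1Props R p₁) {y : Fin ℓ → H} (hy : GoodTup R p₁ y)
    {e₀ n₀ : Fin ℓ → H} (he₀ : e₀ ∈ ESet R) (hn₀ : n₀ ∈ NSet R)
    (he₀m : StrictMono e₀) (hn₀m : StrictMono n₀)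
    (as₁ as₂ : List (Fin ℓ → H)) {b b' : Fin ℓ → H}
    (hb : StrictMono b) (hb' : StrictMono b') :
    pstack p₁ (as₁ ++ y :: as₂) b ∈ orbitOrdOf R (pstack p₁ (as₁ ++ y :: as₂) b') := by
  rw [pstack_append, pstack_append]
  apply pstack_ordO hp as₁
  simp only [pstack_cons]
  exact good_collapse hy (pstack_mono hp as₂ hb) (pstack_mono hp as₂ hb')
    he₀ hn₀ he₀m hn₀m

end Statement3Helpers

/-- if `I` is `ℓ`-minimal, non-trivial, `p₁,m`-closed, with all binary
projections meeting the injective pairs, and `S` is a set of increasing `ℓ`-tuples of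
variables whose projections contain an injective orbit and no non-deterministic orbit, then
solvability of `I` implies solvability of the injective finitisation of `I` on `S`. -/
theorem statement3 {H : Type*} [LinearOrder H] {ℓ : ℕ} {R : Set (Fin ℓ → H)}
    {p₁ : H → H → H} {m : H → H → H → H}
    (ctx : HContext H ℓ R) (hp₁ : P1Props R p₁) (hm : MProps R m)
    {V : Type*} [Fintype V] [LinearOrder V] (I : CSPInstance V H)
    (hmin : LMinimal ℓ I) (hnt : I.NonTrivial) (hclosed : PMClosed R p₁ m I)
    (hbin : ∀ u v : V, u ≠ v → ∃ t ∈ I.proj ![u, v], t 0 ≠ t 1)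
    (S : Set (IncTup V ℓ))
    (hSinj : ∀ t ∈ S, ∃ a : Fin ℓ → H, Function.Injective a ∧ orbitOf R a ⊆ I.proj t.1)
    (hSdet : ∀ t ∈ S, ∀ O : Set (Fin ℓ → H),
      IsNonDeterministicOrbit R p₁ O → ¬ O ⊆ I.proj t.1)
    (hsol : ∃ f : V → H, I.IsSolution f) :
    ∃ g, (injFinitisation R I S).IsSolution g := by
  classical
  obtain ⟨f, hf⟩ := hsol
  choose fC hfCmem hfCagr using hf
  -- pointwise injectivity of p₁
  have pinj : ∀ {a b c d : H}, p₁ a b = p₁ c d → a = c ∧ b = d := by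
    intro a b c d h
    have h2 : ((a, b) : H × H) = (c, d) := hp₁.inj (a₁ := (a, b)) (a₂ := (c, d)) h
    exact ⟨congrArg Prod.fst h2, congrArg Prod.snd h2⟩
  have two_le : (2 : ℕ) ≤ ℓ := le_trans (by norm_num) ctx.three_le
  -- pair separation within any constraint
  have hsep2 : ∀ C ∈ I.constraints, ∀ u v : V, u ∈ C.scope → v ∈ C.scope → u ≠ v →
      ∃ h ∈ C.maps, h u ≠ h v := by
    intro C hC u v hu hv huv
    obtain ⟨tup, htupmem, htupne⟩ := hbin u v huv
    obtain ⟨C', hC', hscope', htup⟩ := htupmem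
    have hCscope : ∀ i, (![u, v] : Fin 2 → V) i ∈ C.scope := by
      intro i; fin_cases i <;> simpa
    have hproj := hmin.2 2 two_le ![u, v] C hC C' hC' hCscope hscope'
    rw [← hproj] at htup
    obtain ⟨h, hh, hcomp⟩ := htup
    refine ⟨h, hh, ?_⟩
    have h0 : h u = tup 0 := by
      have := congrFun hcomp 0
      simpa using this
    have h1 : h v = tup 1 := by
      have := congrFun hcomp 1
      simpa using this
    rw [h0, h1]; exact htupne
  -- separation on a whole finite set of pairs
  have hsepAll : ∀ C ∈ I.constraints, ∀ P : Finset (V × V),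
      (∀ p ∈ P, p.1 ∈ C.scope ∧ p.2 ∈ C.scope ∧ p.1 ≠ p.2) →
      ∃ h ∈ C.maps, ∀ p ∈ P, h p.1 ≠ h p.2 := by
    intro C hC P
    induction P using Finset.induction_on with
    | empty =>
      intro _
      obtain ⟨h0, hh0⟩ := hnt C hC
      exact ⟨h0, hh0, fun p hp => absurd hp (by simp)⟩
    | @insert p P hpP ih =>
      intro hall
      obtain ⟨h1, hh1, hsep1⟩ := ih (fun q hq => hall q (Finset.mem_insert_of_mem hq))
      obtain ⟨hp0, hp1, hpne⟩ := hall p (Finset.mem_insert_self p P)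
      obtain ⟨h2, hh2, hne2⟩ := hsep2 C hC p.1 p.2 hp0 hp1 hpne
      refine ⟨fun x => p₁ (h2 x) (h1 x), (hclosed C hC).2.1 h2 hh2 h1 hh1, ?_⟩
      intro q hq
      rcases Finset.mem_insert.mp hq with rfl | hq'
      · intro hEq; exact hne2 (pinj hEq).1
      · intro hEq; exact hsep1 q hq' (pinj hEq).2
  -- every constraint has a map strictly increasing on its scope
  have hGex : ∀ C ∈ I.constraints, ∃ G ∈ C.maps,
      ∀ u ∈ C.scope, ∀ v ∈ C.scope, u < v → G u < G v := by
    intro C hC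
    obtain ⟨h, hh, hsep⟩ := hsepAll C hC ((C.scope ×ˢ C.scope).filter (fun p => p.1 ≠ p.2))
      (by
        intro p hp
        rw [Finset.mem_filter, Finset.mem_product] at hp
        exact ⟨hp.1.1, hp.1.2, hp.2⟩)
    have hinjOn : ∀ u ∈ C.scope, ∀ v ∈ C.scope, u ≠ v → h u ≠ h v := by
      intro u hu v hv huv
      exact hsep (u, v)
        (by rw [Finset.mem_filter, Finset.mem_product]; exact ⟨⟨hu, hv⟩, huv⟩)
    have hainj : Function.Injective
        (fun i : Fin C.scope.card => h ((C.scope.orderIsoOfFin rfl i : {x // x ∈ C.scope}) : V)) := by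
      intro i j hij
      by_contra hne
      have hcne : ((C.scope.orderIsoOfFin rfl i : {x // x ∈ C.scope}) : V) ≠
          ((C.scope.orderIsoOfFin rfl j : {x // x ∈ C.scope}) : V) := by
        intro hEq
        exact hne ((C.scope.orderIsoOfFin rfl).injective (Subtype.ext hEq))
      exact hinjOn _ (C.scope.orderIsoOfFin rfl i).2 _ (C.scope.orderIsoOfFin rfl j).2 hcne hij
    obtain ⟨δ, hδ, hδm⟩ := ctx.inc_order C.scope.card _ hainj
    refine ⟨⇑δ ∘ h, (hclosed C hC).1 h hh δ hδ, ?_⟩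
    intro u hu v hv huv
    have h1 : (C.scope.orderIsoOfFin rfl).symm ⟨u, hu⟩ <
        (C.scope.orderIsoOfFin rfl).symm ⟨v, hv⟩ :=
      ((C.scope.orderIsoOfFin rfl).symm.lt_iff_lt).mpr (Subtype.mk_lt_mk.mpr huv)
    have h2 := hδm h1
    simp only [Function.comp_apply, OrderIso.apply_symm_apply] at h2
    exact h2
  -- strictly increasing representatives of E and N
  obtain ⟨e', he'⟩ := ctx.E_nonempty
  obtain ⟨δe, hδe, hδem⟩ := ctx.inc_order ℓ e' he'.1
  obtain ⟨n', hn'⟩ := ctx.N_nonempty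
  obtain ⟨δn, hδn, hδnm⟩ := ctx.inc_order ℓ n' hn'.1
  have he₀E : (⇑δe ∘ e') ∈ ESet R := ⟨hδem.injective, (hδe e').mpr he'.2⟩
  have hn₀N : (⇑δn ∘ n') ∈ NSet R := ⟨hδnm.injective, fun hc => hn'.2 ((hδn n').mp hc)⟩
  -- the bad tuples and their determinism witnesses
  have hdetex : ∀ t : IncTup V ℓ, t ∈ S → ¬Function.Injective (f ∘ t.1) →
      ∃ b : Equiv.Perm H, IsAut R b ∧ GoodTup R p₁ (fun i => b (f (t.1 i))) := by
    intro t htS htni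
    have hOproj : orbitOf R (f ∘ t.1) ⊆ I.proj t.1 := by
      rintro b ⟨γ, hγ, rfl⟩
      obtain ⟨C₀, hC₀, hW⟩ := hmin.1 (Finset.image t.1 Finset.univ)
        (le_trans Finset.card_image_le (by simp))
      have hsc : ∀ i, t.1 i ∈ C₀.scope :=
        fun i => hW (Finset.mem_image_of_mem _ (Finset.mem_univ i))
      refine ⟨C₀, hC₀, hsc, ?_⟩
      refine ⟨⇑γ ∘ fC C₀ hC₀, (hclosed C₀ hC₀).1 _ (hfCmem C₀ hC₀) γ hγ, ?_⟩
      funext i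
      simp only [Function.comp_apply]
      rw [← hfCagr C₀ hC₀ (t.1 i) (hsc i)]
    have hdet1 : DeterministicAt R p₁ (f ∘ t.1) := by
      by_contra hc
      exact hSdet t htS (orbitOf R (f ∘ t.1))
        ⟨⟨f ∘ t.1, htni, rfl⟩,
          fun hall => hc (hall _ ⟨1, isAut_one, by funext i; rfl⟩)⟩ hOproj
    obtain ⟨b, hb1, hb2⟩ := hdet1
    exact ⟨b, hb1, hb2⟩
  -- global choice of determinism witnesses
  have hβex : ∀ t : IncTup V ℓ, ∃ b : Equiv.Perm H, IsAut R b ∧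
      ((t ∈ S ∧ ¬Function.Injective (f ∘ t.1)) → GoodTup R p₁ (fun i => b (f (t.1 i)))) := by
    intro t
    by_cases h : t ∈ S ∧ ¬Function.Injective (f ∘ t.1)
    · obtain ⟨b, hb1, hb2⟩ := hdetex t h.1 h.2
      exact ⟨b, hb1, fun _ => hb2⟩
    · exact ⟨1, isAut_one, fun hc => absurd hc h⟩
  choose β hβA hβG using hβex
  set bads : Finset (IncTup V ℓ) :=
    Finset.univ.filter (fun t => t ∈ S ∧ ¬Function.Injective (f ∘ t.1)) with hbadsdef
  set L : List (IncTup V ℓ) := bads.toList with hLdef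
  -- the reference tuples and the candidate solution
  set ζ : IncTup V ℓ → (Fin ℓ → H) :=
    fun t => pstack p₁ (L.map (fun t' => fun i => β t' (f (t.1 i)))) (⇑δe ∘ e') with hζdef
  set gsol : IncTup V ℓ → Set (Fin ℓ → H) := fun t =>
    if Function.Injective (f ∘ t.1) then cls R (f ∘ t.1)
    else cls R (fun i => p₁ (f (t.1 i)) (ζ t i)) with hgdef
  refine ⟨gsol, ?_⟩
  intro D hD
  simp only [injFinitisation, CSPInstance.restrictVars, CSPInstance.injectivise,
    CSPInstance.finitise, List.map_map, List.mem_map, Function.comp] at hD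
  obtain ⟨C, hC, rfl⟩ := hD
  -- data for the constraint C
  obtain ⟨G, hG, hGmono⟩ := hGex C hC
  set φ : V → H := fC C hC with hφdef
  have hCmem : φ ∈ C.maps := hfCmem C hC
  have hφagr : ∀ x ∈ C.scope, φ x = f x := fun x hx => (hfCagr C hC x hx).symm
  set Z : V → H := L.foldr (fun t' acc => fun v => p₁ (β t' (φ v)) (acc v)) G with hZdef
  have hZmem : Z ∈ C.maps := by
    rw [hZdef]
    have : ∀ (L' : List (IncTup V ℓ)),
        (L'.foldr (fun t' acc => fun v => p₁ (β t' (φ v)) (acc v)) G) ∈ C.maps := by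
      intro L'
      induction L' with
      | nil => exact hG
      | cons hd tl ih =>
        exact (hclosed C hC).2.1 (fun v => β hd (φ v))
          ((hclosed C hC).1 φ hCmem (β hd) (hβA hd)) _ ih
    exact this L
  set F : V → H := fun v => p₁ (φ v) (Z v) with hFdef
  have hFmem : F ∈ C.maps := (hclosed C hC).2.1 φ hCmem Z hZmem
  -- tuple-level description of Z
  have hZw : ∀ (w : IncTup V ℓ), (fun i => Z (w.1 i)) =
      pstack p₁ (L.map (fun t' => fun i => β t' (φ (w.1 i)))) (fun i => G (w.1 i)) := by
    intro w
    rw [hZdef]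
    have : ∀ (L' : List (IncTup V ℓ)),
        (fun i => (L'.foldr (fun t' acc => fun v => p₁ (β t' (φ v)) (acc v)) G) (w.1 i)) =
        pstack p₁ (L'.map (fun t' => fun i => β t' (φ (w.1 i)))) (fun i => G (w.1 i)) := by
      intro L'
      induction L' with
      | nil => rfl
      | cons hd tl ih =>
        funext i
        simp only [List.foldr_cons, List.map_cons, pstack_cons]
        exact congrArg (p₁ (β hd (φ (w.1 i)))) (congrFun ih i)
    exact this L
  have hGw : ∀ (w : IncTup V ℓ), (∀ i, w.1 i ∈ C.scope) →
      StrictMono (fun i => G (w.1 i)) :=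
    fun w hw i j hij => hGmono _ (hw i) _ (hw j) (w.2 hij)
  have hZwm : ∀ (w : IncTup V ℓ), (∀ i, w.1 i ∈ C.scope) →
      StrictMono (fun i => Z (w.1 i)) := by
    intro w hw
    rw [hZw w]
    exact pstack_mono hp₁ _ (hGw w hw)
  have hFwm : ∀ (w : IncTup V ℓ), (∀ i, w.1 i ∈ C.scope) →
      StrictMono (fun i => F (w.1 i)) := by
    intro w hw
    rw [hFdef]
    intro i j hij
    exact hp₁.lex _ _ _ _ (Or.inl (hZwm w hw hij))
  -- the witness map for the finitised constraint
  refine ⟨fun w => if h : (∀ i, w.1 i ∈ C.scope) then cls R (fun i => F (w.1 i)) else gsol w,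
    ⟨⟨?_, F, hFmem, ?_⟩, ?_⟩, ?_⟩
  · -- condition (1): values on the scope are orbits
    intro w hw
    simp only [dif_pos hw]
    exact ⟨fun i => F (w.1 i), cls_eq_orbitOf ctx (hFwm w hw).injective⟩
  · -- condition (2): F realises the assignment
    intro w hw
    simp only [dif_pos hw]
    exact cls_self (hFwm w hw).injective
  · -- injectivisation condition
    intro w hw
    have hw' : ∀ i, w.1 i ∈ C.scope := by
      have := Finset.mem_filter.mp hw
      exact this.2
    simp only [dif_pos hw']
    exact cls_or _
  · -- agreement with gsol on the restricted scope
    intro x hx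
    have hx' := Finset.mem_filter.mp hx
    have hxS : x ∈ S := hx'.2
    have hxsc : ∀ i, x.1 i ∈ C.scope := (Finset.mem_filter.mp hx'.1).2
    simp only [dif_pos hxsc]
    by_cases hinj : Function.Injective (f ∘ x.1)
    · rw [hgdef]
      simp only []
      rw [if_pos hinj]
      have hFx : (fun i => F (x.1 i)) = fun i => p₁ ((f ∘ x.1) i) (Z (x.1 i)) := by
        rw [hFdef]
        funext i
        simp only [Function.comp_apply]
        rw [hφagr _ (hxsc i)]
      rw [hFx]
      exact (cls_of_orbit (hp₁.firstProj (f ∘ x.1) (fun i => Z (x.1 i)) hinj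
        (hZwm x hxsc).injective)).symm
    · rw [hgdef]
      simp only []
      rw [if_neg hinj]
      have hxbads : x ∈ bads := by
        rw [hbadsdef]
        exact Finset.mem_filter.mpr ⟨Finset.mem_univ _, hxS, hinj⟩
      have hxL : x ∈ L := by rw [hLdef]; exact Finset.mem_toList.mpr hxbads
      obtain ⟨l₁, l₂, hsplit⟩ := List.append_of_mem hxL
      have hZx : (fun i => Z (x.1 i)) =
          pstack p₁ (L.map (fun t' => fun i => β t' (f (x.1 i)))) (fun i => G (x.1 i)) := by
        have hfun : (fun t' : IncTup V ℓ => fun i => β t' (φ (x.1 i))) =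
            (fun t' : IncTup V ℓ => fun i => β t' (f (x.1 i))) := by
          funext t' i
          rw [hφagr _ (hxsc i)]
        rw [hZw x, hfun]
      have hkey : (fun i => Z (x.1 i)) ∈ orbitOrdOf R (ζ x) := by
        rw [hZx, hζdef]
        simp only []
        rw [hsplit, List.map_append, List.map_cons]
        exact pstack_key hp₁ (hβG x ⟨hxS, hinj⟩) he₀E hn₀N hδem hδnm _ _
          (hGw x hxsc) hδem
      have hlayer : (fun i => p₁ ((f ∘ x.1) i) (Z (x.1 i))) ∈
          orbitOrdOf R (fun i => p₁ (f (x.1 i)) (ζ x i)) :=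
        hp₁.canonical ℓ (f ∘ x.1) (ζ x) (f ∘ x.1) (fun i => Z (x.1 i)) (ordO_refl _) hkey
      have hFx : (fun i => F (x.1 i)) = fun i => p₁ ((f ∘ x.1) i) (Z (x.1 i)) := by
        rw [hFdef]
        funext i
        simp only [Function.comp_apply]
        rw [hφagr _ (hxsc i)]
      rw [hFx]
      exact (cls_of_ordO hlayer).symm
end

section
/- Let 𝓘 be an ℓ-minimal, p₁,m-closed CSP instance over H. Then there exists an ℓ-minimal, eq-subdirect, p₁,m-closed CSP instance 𝓘' with the same variable set and the same solution set as 𝓘, in which every constraint is a subset of the corresponding constraint of 𝓘. -/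
open scoped Classical

/-- every `ℓ`-minimal `p₁,m`-closed instance can be shrunk (constraintwise) to
an `ℓ`-minimal, eq-subdirect, `p₁,m`-closed instance with the same variables and the same
solution set. -/
theorem statement5 {H : Type*} [LinearOrder H] {ℓ : ℕ} {R : Set (Fin ℓ → H)}
    {p₁ : H → H → H} {m : H → H → H → H}
    (ctx : HContext H ℓ R) (hp₁ : P1Props R p₁) (hm : MProps R m)
    {V : Type*} [Fintype V] [LinearOrder V] (I : CSPInstance V H)
    (hmin : LMinimal ℓ I) (hclosed : PMClosed R p₁ m I) :
    ∃ I' : CSPInstance V H, LMinimal ℓ I' ∧ EqSubdirect R I' ∧ PMClosed R p₁ m I' ∧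
      (∀ f : V → H, I'.IsSolution f ↔ I.IsSolution f) ∧ Refines I' I := by
  classical
  -- solutions of I are closed under automorphisms, p₁ and m
  have solAut : ∀ (α : Equiv.Perm H), IsAut R α → ∀ s, I.IsSolution s →
      I.IsSolution (⇑α ∘ s) := by
    intro α hα s hs C hC
    obtain ⟨g, hg, hag⟩ := hs C hC
    refine ⟨⇑α ∘ g, (hclosed C hC).1 g hg α hα, fun x hx => ?_⟩
    simp only [Function.comp_apply, hag x hx]
  have solP : ∀ s u, I.IsSolution s → I.IsSolution u →
      I.IsSolution (fun x => p₁ (s x) (u x)) := by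
    intro s u hs hu C hC
    obtain ⟨g, hg, hag⟩ := hs C hC
    obtain ⟨g', hg', hag'⟩ := hu C hC
    exact ⟨fun x => p₁ (g x) (g' x), (hclosed C hC).2.1 g hg g' hg',
      fun x hx => by simp only [hag x hx, hag' x hx]⟩
  have solM : ∀ s u w, I.IsSolution s → I.IsSolution u → I.IsSolution w →
      I.IsSolution (fun x => m (s x) (u x) (w x)) := by
    intro s u w hs hu hw C hC
    obtain ⟨g, hg, hag⟩ := hs C hC
    obtain ⟨g', hg', hag'⟩ := hu C hC
    obtain ⟨g'', hg'', hag''⟩ := hw C hC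
    exact ⟨fun x => m (g x) (g' x) (g'' x), (hclosed C hC).2.2 g hg g' hg' g'' hg'',
      fun x hx => by simp only [hag x hx, hag' x hx, hag'' x hx]⟩
  -- the shrinking operation on constraints
  set Sh : Constraint V H → Constraint V H := fun C =>
    ⟨C.scope, {f | f ∈ C.maps ∧ ∃ s, I.IsSolution s ∧ ∀ x ∈ C.scope, s x = f x}⟩ with hSh
  set I' : CSPInstance V H := ⟨I.constraints.map Sh⟩ with hI'
  have memI' : ∀ C' ∈ I'.constraints, ∃ C ∈ I.constraints, C' = Sh C := by
    intro C' hC'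
    simp only [hI', List.mem_map] at hC'
    obtain ⟨C, hC, rfl⟩ := hC'
    exact ⟨C, hC, rfl⟩
  have solIff : ∀ f, I'.IsSolution f ↔ I.IsSolution f := by
    intro f
    constructor
    · intro hf C hC
      obtain ⟨g, hg, hag⟩ := hf (Sh C) (List.mem_map_of_mem (f := Sh) hC)
      exact ⟨g, hg.1, hag⟩
    · intro hf C' hC'
      obtain ⟨C, hC, rfl⟩ := memI' C' hC'
      obtain ⟨g, hg, hag⟩ := hf C hC
      exact ⟨g, ⟨hg, f, hf, hag⟩, hag⟩
  -- projections of shrunk constraints are the projections of the solution set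
  have projChar : ∀ C ∈ I.constraints, ∀ (k : ℕ) (t : Fin k → V), (∀ i, t i ∈ C.scope) →
      (Sh C).proj t = {a | ∃ s, I.IsSolution s ∧ s ∘ t = a} := by
    intro C hC k t htC
    ext a
    constructor
    · rintro ⟨f, ⟨hf, s, hs, hag⟩, rfl⟩
      exact ⟨s, hs, funext fun i => hag (t i) (htC i)⟩
    · rintro ⟨s, hs, rfl⟩
      obtain ⟨g, hg, hag⟩ := hs C hC
      exact ⟨g, ⟨hg, s, hs, hag⟩, funext fun i => (hag (t i) (htC i)).symm⟩
  refine ⟨I', ⟨?_, ?_⟩, ?_, ?_, solIff, ?_⟩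
  · -- scope coverage
    intro W hW
    obtain ⟨C, hC, hsub⟩ := hmin.1 W hW
    exact ⟨Sh C, List.mem_map_of_mem (f := Sh) hC, hsub⟩
  · -- projection consistency
    intro k hk t C₁ hC₁ C₂ hC₂ h1 h2
    obtain ⟨D₁, hD₁, rfl⟩ := memI' C₁ hC₁
    obtain ⟨D₂, hD₂, rfl⟩ := memI' C₂ hC₂
    rw [projChar D₁ hD₁ k t h1, projChar D₂ hD₂ k t h2]
  · -- eq-subdirectness
    intro t ht O hO hsubO
    obtain ⟨a0, ha0inj, hOeq⟩ := hO
    have hid : IsAut R (Equiv.refl H) := fun u => by simp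
    have ha0O : a0 ∈ O := by
      rw [hOeq]; exact ⟨Equiv.refl H, hid, rfl⟩
    obtain ⟨C₁, hC₁, hscope, f, hf, hft⟩ := hsubO ha0O
    obtain ⟨D, hD, rfl⟩ := memI' C₁ hC₁
    obtain ⟨hfD, s, hs, hag⟩ := hf
    have hst : s ∘ t = a0 := by
      rw [← hft]; funext i; exact hag (t i) (hscope i)
    have hs' : I'.IsSolution s := (solIff s).mpr hs
    refine ⟨s, ?_⟩
    intro D' hD'
    simp only [CSPInstance.eqClosure, CSPInstance.restrictTuple, List.map_map,
      List.mem_map, Function.comp_apply] at hD'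
    obtain ⟨C₀, hC₀, rfl⟩ := hD'
    obtain ⟨C₂, hC₂, rfl⟩ := memI' C₀ hC₀
    obtain ⟨g, hg, hag2⟩ := hs' (Sh C₂) (List.mem_map_of_mem (f := Sh) hC₂)
    by_cases hc : ∀ i, t i ∈ (Sh C₂).scope
    · rw [if_pos hc]
      refine ⟨g, ⟨g, ⟨hg, ?_⟩, Equiv.refl H, rfl⟩, hag2⟩
      have : g ∘ t = a0 := by
        rw [← hst]; funext i; exact (hag2 (t i) (hc i)).symm
      rw [show (g ∘ t) = a0 from this]
      exact ha0O
    · rw [if_neg hc]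
      exact ⟨g, ⟨g, hg, Equiv.refl H, rfl⟩, hag2⟩
  · -- p₁, m-closedness
    intro C' hC'
    obtain ⟨C, hC, rfl⟩ := memI' C' hC'
    refine ⟨?_, ?_, ?_⟩
    · rintro f ⟨hfC, s, hs, hag⟩ α hα
      refine ⟨(hclosed C hC).1 f hfC α hα, ⇑α ∘ s, solAut α hα s hs, fun x hx => ?_⟩
      simp only [Function.comp_apply, hag x hx]
    · rintro f ⟨hfC, s, hs, hag⟩ g ⟨hgC, u, hu, hag'⟩
      refine ⟨(hclosed C hC).2.1 f hfC g hgC, fun x => p₁ (s x) (u x), solP s u hs hu,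
        fun x hx => ?_⟩
      simp only [hag x hx, hag' x hx]
    · rintro f ⟨hfC, s, hs, hag⟩ g ⟨hgC, u, hu, hag'⟩ h ⟨hhC, w, hw, hag''⟩
      refine ⟨(hclosed C hC).2.2 f hfC g hgC h hhC, fun x => m (s x) (u x) (w x),
        solM s u w hs hu hw, fun x hx => ?_⟩
      simp only [hag x hx, hag' x hx, hag'' x hx]
  · -- refinement
    simp only [Refines, hI']
    rw [List.forall₂_map_left_iff]
    rw [List.forall₂_same]
    intro C hC
    exact ⟨rfl, fun f hf => hf.1⟩
end

section
/- Let 𝔸 be a relational structure with countable domain A whose automorphism group Aut(𝔸) is oligomorphic (finitely many orbits on A^q for every q). Let 1 ≤ k ≤ m ≤ n, and let S ⊆ R ⊆ A^k be relations that are Aut(𝔸)-invariant and preserved by every polymorphism of 𝔸, with S ◁_𝔸 R. Let 𝓘 = (V,𝒞) be a non-trivial, (m,n)-minimal CSP instance over A each of whose constraints is Aut(𝔸)-invariant and preserved by every polymorphism of 𝔸. Let 𝓘' be the instance obtained from 𝓘 by adding, for every k-tuple v = (v₁,…,v_k) of variables with proj_v(𝓘) ⊆ R, S ∩ proj_v(𝓘)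 ≠ ∅, and S ∩ proj_v(𝓘) ◁_𝔸 R, the constraint {c : {v₁,…,v_k} → A : c(v) ∈ S}. Then there exists a non-trivial, (m,n)-minimal CSP instance 𝓙 with variable set V such that every constraint of 𝓙 is a subset of a constraint of 𝓘'; in particular, the (m,n)-minimal instance equivalent to 𝓘' is non-trivial. -/
open scoped Classical

section AbsorbAux

variable {V : Type*} {A : Type*} [Fintype V] {ι : Type*} [Fintype ι]

/-- One step of `(m,n)`-minimalisation of an indexed family of constraint relations. -/
def stepFam (m : ℕ) (scope : ι → Finset V) (X : ι → Set (V → A)) : ι → Set (V → A) :=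
  fun i => {g ∈ X i | ∀ (q : ℕ), q ≤ m → ∀ s : Fin q → V, ∀ i' : ι,
    (∀ j, s j ∈ scope i) → (∀ j, s j ∈ scope i') → ∃ g' ∈ X i', g' ∘ s = g ∘ s}

/-- The invariant maintained during minimalisation. -/
def InvFam (Amb X0 : ι → Set (V → A)) (f₀ : A → A → A) (GA : Equiv.Perm A → Prop)
    (X : ι → Set (V → A)) : Prop :=
  ∀ i, X i ⊆ X0 i ∧ (X i).Nonempty ∧
    (∀ α : Equiv.Perm A, GA α → ∀ g ∈ X i, (⇑α ∘ g) ∈ X i) ∧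
    (∀ a ∈ Amb i, ∀ x ∈ X i,
      (fun v => f₀ (a v) (x v)) ∈ X i ∧ (fun v => f₀ (x v) (a v)) ∈ X i)

lemma absorb_fixpoint (m : ℕ) (scope : ι → Finset V) (Amb X0 : ι → Set (V → A))
    (f₀ : A → A → A) (GA : Equiv.Perm A → Prop) (hGrefl : GA (Equiv.refl A))
    (horb : {O : Set (V → A) | ∃ g : V → A,
      O = {h | ∃ α : Equiv.Perm A, GA α ∧ ⇑α ∘ g = h}}.Finite)
    (h2 : ∀ i, X0 i ⊆ Amb i) (h3 : ∀ i, (X0 i).Nonempty)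
    (h4 : ∀ i, ∀ α : Equiv.Perm A, GA α → ∀ g ∈ X0 i, (⇑α ∘ g) ∈ X0 i)
    (h5 : ∀ i, ∀ a ∈ Amb i, ∀ x ∈ X0 i,
      (fun v => f₀ (a v) (x v)) ∈ X0 i ∧ (fun v => f₀ (x v) (a v)) ∈ X0 i)
    (h6 : ∀ (q : ℕ), q ≤ m → ∀ s : Fin q → V, ∀ i i' : ι,
      (∀ j, s j ∈ scope i) → (∀ j, s j ∈ scope i') →
      (fun g : V → A => g ∘ s) '' Amb i = (fun g : V → A => g ∘ s) '' Amb i') :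
    ∃ X : ι → Set (V → A), (∀ i, X i ⊆ X0 i) ∧ (∀ i, (X i).Nonempty) ∧
      ∀ (q : ℕ), q ≤ m → ∀ s : Fin q → V, ∀ i i' : ι,
        (∀ j, s j ∈ scope i) → (∀ j, s j ∈ scope i') →
        (fun g : V → A => g ∘ s) '' X i = (fun g : V → A => g ∘ s) '' X i' := by
  classical
  have hsub : ∀ X : ι → Set (V → A), ∀ i, stepFam m scope X i ⊆ X i := fun X i g hg => hg.1
  -- the invariant is preserved by the minimalisation step
  have hstep : ∀ X : ι → Set (V → A), InvFam Amb X0 f₀ GA X →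
      InvFam Amb X0 f₀ GA (stepFam m scope X) := by
    intro X hX
    have hXA : ∀ i, X i ⊆ Amb i := fun i => (hX i).1.trans (h2 i)
    intro i
    refine ⟨(hsub X i).trans (hX i).1, ?_, ?_, ?_⟩
    · -- nonemptiness, via binary absorption
      have key : ∀ T : Finset ((Σ q : Fin (m+1), (Fin (q : ℕ) → V)) × ι),
          ∃ x ∈ X i, ∀ r ∈ T, (∀ j, r.1.2 j ∈ scope i) → (∀ j, r.1.2 j ∈ scope r.2) →
            ∃ g' ∈ X r.2, g' ∘ r.1.2 = x ∘ r.1.2 := by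
        intro T
        induction T using Finset.induction_on with
        | empty =>
          obtain ⟨x, hx⟩ := (hX i).2.1
          exact ⟨x, hx, fun r hr => (Finset.notMem_empty r hr).elim⟩
        | @insert r T hrT ih =>
          obtain ⟨x, hxX, hxT⟩ := ih
          by_cases hsc : (∀ j, r.1.2 j ∈ scope i) ∧ (∀ j, r.1.2 j ∈ scope r.2)
          · have hq : (r.1.1 : ℕ) ≤ m := Nat.lt_succ_iff.mp r.1.1.isLt
            obtain ⟨x₀, hx₀⟩ := (hX r.2).2.1
            have hAmbEq := h6 (r.1.1 : ℕ) hq r.1.2 i r.2 hsc.1 hsc.2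
            have hx₀A : x₀ ∘ r.1.2 ∈ (fun g : V → A => g ∘ r.1.2) '' Amb i := by
              rw [hAmbEq]; exact ⟨x₀, hXA r.2 hx₀, rfl⟩
            obtain ⟨h, hhA, hhs⟩ := hx₀A
            refine ⟨fun v => f₀ (h v) (x v), ((hX i).2.2.2 h hhA x hxX).1, ?_⟩
            intro r' hr'
            rcases Finset.mem_insert.mp hr' with rfl | hr'T
            · intro _ _
              have hxs : x ∘ r'.1.2 ∈ (fun g : V → A => g ∘ r'.1.2) '' Amb r'.2 := by
                rw [← hAmbEq]; exact ⟨x, hXA i hxX, rfl⟩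
              obtain ⟨a, haA, has⟩ := hxs
              refine ⟨fun v => f₀ (x₀ v) (a v), ((hX r'.2).2.2.2 a haA x₀ hx₀).2, ?_⟩
              funext j
              have e1 : h (r'.1.2 j) = x₀ (r'.1.2 j) := congrFun hhs j
              have e2 : a (r'.1.2 j) = x (r'.1.2 j) := congrFun has j
              show f₀ (x₀ (r'.1.2 j)) (a (r'.1.2 j)) = f₀ (h (r'.1.2 j)) (x (r'.1.2 j))
              rw [e1, e2]
            · intro hs1' hs2'
              obtain ⟨u, huX, hus⟩ := hxT r' hr'T hs1' hs2'
              have hq' : (r'.1.1 : ℕ) ≤ m := Nat.lt_succ_iff.mp r'.1.1.isLt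
              have hAmb' := h6 (r'.1.1 : ℕ) hq' r'.1.2 i r'.2 hs1' hs2'
              have hhA' : h ∘ r'.1.2 ∈ (fun g : V → A => g ∘ r'.1.2) '' Amb r'.2 := by
                rw [← hAmb']; exact ⟨h, hhA, rfl⟩
              obtain ⟨a, haA, has⟩ := hhA'
              refine ⟨fun v => f₀ (a v) (u v), ((hX r'.2).2.2.2 a haA u huX).1, ?_⟩
              funext j
              have e1 : a (r'.1.2 j) = h (r'.1.2 j) := congrFun has j
              have e2 : u (r'.1.2 j) = x (r'.1.2 j) := congrFun hus j
              show f₀ (a (r'.1.2 j)) (u (r'.1.2 j)) = f₀ (h (r'.1.2 j)) (x (r'.1.2 j))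
              rw [e1, e2]
          · refine ⟨x, hxX, ?_⟩
            intro r' hr'
            rcases Finset.mem_insert.mp hr' with rfl | hr'T
            · intro ha hb; exact absurd ⟨ha, hb⟩ hsc
            · exact hxT r' hr'T
      obtain ⟨x, hxX, hxT⟩ := key Finset.univ
      refine ⟨x, hxX, ?_⟩
      intro q hq s i' h1' h2'
      exact hxT ⟨⟨⟨q, Nat.lt_succ_of_le hq⟩, s⟩, i'⟩ (Finset.mem_univ _) h1' h2'
    · -- invariance under GA
      intro α hα g hg
      refine ⟨(hX i).2.2.1 α hα g hg.1, ?_⟩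
      intro q hq s i' h1' h2'
      obtain ⟨g', hg', he⟩ := hg.2 q hq s i' h1' h2'
      refine ⟨⇑α ∘ g', (hX i').2.2.1 α hα g' hg', ?_⟩
      funext j
      exact congrArg α (congrFun he j)
    · -- absorption
      intro a haA x hx
      constructor
      · refine ⟨((hX i).2.2.2 a haA x hx.1).1, ?_⟩
        intro q hq s i' h1' h2'
        obtain ⟨x', hx', he⟩ := hx.2 q hq s i' h1' h2'
        have haA' : a ∘ s ∈ (fun g : V → A => g ∘ s) '' Amb i' := by
          rw [← h6 q hq s i i' h1' h2']; exact ⟨a, haA, rfl⟩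
        obtain ⟨a', ha', hea⟩ := haA'
        refine ⟨fun v => f₀ (a' v) (x' v), ((hX i').2.2.2 a' ha' x' hx').1, ?_⟩
        funext j
        have e1 : a' (s j) = a (s j) := congrFun hea j
        have e2 : x' (s j) = x (s j) := congrFun he j
        show f₀ (a' (s j)) (x' (s j)) = f₀ (a (s j)) (x (s j))
        rw [e1, e2]
      · refine ⟨((hX i).2.2.2 a haA x hx.1).2, ?_⟩
        intro q hq s i' h1' h2'
        obtain ⟨x', hx', he⟩ := hx.2 q hq s i' h1' h2'
        have haA' : a ∘ s ∈ (fun g : V → A => g ∘ s) '' Amb i' := by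
          rw [← h6 q hq s i i' h1' h2']; exact ⟨a, haA, rfl⟩
        obtain ⟨a', ha', hea⟩ := haA'
        refine ⟨fun v => f₀ (x' v) (a' v), ((hX i').2.2.2 a' ha' x' hx').2, ?_⟩
        funext j
        have e1 : a' (s j) = a (s j) := congrFun hea j
        have e2 : x' (s j) = x (s j) := congrFun he j
        show f₀ (x' (s j)) (a' (s j)) = f₀ (x (s j)) (a (s j))
        rw [e1, e2]
  -- a measure forcing stabilisation, via oligomorphicity
  let μ : (ι → Set (V → A)) → ℕ :=
    fun X => ∑ i : ι, (horb.toFinset.filter (fun O => O ⊆ X i)).card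
  have hdec : ∀ X : ι → Set (V → A),
      (∀ i, ∀ α : Equiv.Perm A, GA α → ∀ g ∈ X i, (⇑α ∘ g) ∈ X i) →
      stepFam m scope X ≠ X → μ (stepFam m scope X) < μ X := by
    intro X hinv hne
    have hex : ∃ i, ∃ g ∈ X i, g ∉ stepFam m scope X i := by
      by_contra hcon
      push_neg at hcon
      apply hne
      funext i
      exact Set.Subset.antisymm (hsub X i) (fun g hg => hcon i g hg)
    obtain ⟨i, g, hgX, hgns⟩ := hex
    refine Finset.sum_lt_sum (fun j _ => Finset.card_le_card ?_) ⟨i, Finset.mem_univ i, ?_⟩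
    · intro O hO
      rw [Finset.mem_filter] at hO ⊢
      exact ⟨hO.1, hO.2.trans (hsub X j)⟩
    · refine Finset.card_lt_card ?_
      rw [Finset.ssubset_def]
      constructor
      · intro O hO
        rw [Finset.mem_filter] at hO ⊢
        exact ⟨hO.1, hO.2.trans (hsub X i)⟩
      · intro hcon
        have h1 : {h | ∃ α : Equiv.Perm A, GA α ∧ ⇑α ∘ g = h} ∈
            horb.toFinset.filter (fun O => O ⊆ X i) := by
          rw [Finset.mem_filter]
          refine ⟨horb.mem_toFinset.mpr ⟨g, rfl⟩, ?_⟩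
          rintro h ⟨α, hα, rfl⟩
          exact hinv i α hα g hgX
        have h2 := hcon h1
        rw [Finset.mem_filter] at h2
        exact hgns (h2.2 ⟨Equiv.refl A, hGrefl, rfl⟩)
  have hinvn : ∀ n, InvFam Amb X0 f₀ GA ((stepFam m scope)^[n] X0) := by
    intro n
    induction n with
    | zero =>
      rw [Function.iterate_zero_apply]
      exact fun i => ⟨subset_rfl, h3 i, h4 i, h5 i⟩
    | succ n ih =>
      rw [Function.iterate_succ_apply']
      exact hstep _ ih
  have hfix : ∃ n, stepFam m scope ((stepFam m scope)^[n] X0) = (stepFam m scope)^[n] X0 := by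
    by_contra hcon
    push_neg at hcon
    have hlt : ∀ n, μ ((stepFam m scope)^[n+1] X0) < μ ((stepFam m scope)^[n] X0) := by
      intro n
      rw [Function.iterate_succ_apply']
      exact hdec _ (fun i => (hinvn n i).2.2.1) (hcon n)
    have hbound : ∀ n, μ ((stepFam m scope)^[n] X0) + n ≤ μ X0 := by
      intro n
      induction n with
      | zero => simp
      | succ n ih =>
        have := hlt n
        omega
    have := hbound (μ X0 + 1)
    omega
  obtain ⟨n, hfixn⟩ := hfix
  refine ⟨(stepFam m scope)^[n] X0, fun i => (hinvn n i).1, fun i => (hinvn n i).2.1, ?_⟩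
  intro q hq s i i' hs1 hs2
  have hset : ∀ j j' : ι, (∀ jj, s jj ∈ scope j) → (∀ jj, s jj ∈ scope j') →
      (fun g : V → A => g ∘ s) '' ((stepFam m scope)^[n] X0 j) ⊆
      (fun g : V → A => g ∘ s) '' ((stepFam m scope)^[n] X0 j') := by
    rintro j j' hj hj' a ⟨g, hg, rfl⟩
    have hg' : g ∈ stepFam m scope ((stepFam m scope)^[n] X0) j := by rw [hfixn]; exact hg
    obtain ⟨g', hgX', he⟩ := hg'.2 q hq s j' hj hj'
    exact ⟨g', hgX', he⟩
  exact Set.Subset.antisymm (hset i i' hs1 hs2) (hset i' i hs2 hs1)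

end AbsorbAux


/-- The key construction: a non-trivial projection-consistent refinement of the
instance with added absorbing constraints. -/
theorem exists_refinement {A : Type*} [Countable A] (𝔸 : RelStruct A) (holig : OligomorphicS 𝔸)
    {k m n : ℕ} (hkm : k ≤ m)
    (S₀ R₀ : Set (Fin k → A))
    (hS₀a : AutInvariantRel 𝔸 S₀)
    (habs : BinAbsorbs 𝔸 S₀ R₀)
    {V : Type*} [Fintype V] (I : CSPInstance V A)
    (hnt : I.NonTrivial) (hmin : MNMinimal m n I)
    (hCa : ∀ C ∈ I.constraints, ConstraintAutInvS 𝔸 C)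
    (hCp : ∀ C ∈ I.constraints, ConstraintPolInv 𝔸 C) :
    ∃ L : CSPInstance V A, L.NonTrivial ∧ Refines L (addAbsorbConstraints I S₀ R₀ 𝔸) ∧
      ProjConsistent m L := by
  classical
  obtain ⟨f₀, hf₀poly, hf₀abs⟩ := habs
  set I' := addAbsorbConstraints I S₀ R₀ 𝔸 with hI'
  -- `f₀` preserves every constraint of `I`
  have hf₀pres : ∀ C ∈ I.constraints, ∀ g₁ ∈ C.maps, ∀ g₂ ∈ C.maps,
      (fun v => f₀ (g₁ v) (g₂ v)) ∈ C.maps := by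
    intro C hC g₁ h₁ g₂ h₂
    have hpoly2 : IsPolymorphism 𝔸 (fun v : Fin 2 → A => f₀ (v 0) (v 1)) := by
      intro i rows hrows
      exact hf₀poly i (rows 0) (hrows 0) (rows 1) (hrows 1)
    have := hCp C hC 2 _ hpoly2 ![g₁, g₂] (by
      intro j
      fin_cases j <;> simpa)
    simpa using this
  -- classification of the constraints of `I'`
  have hclass : ∀ C ∈ I'.constraints, C ∈ I.constraints ∨
      ∃ t : Fin k → V, (I.proj t ⊆ R₀ ∧ (S₀ ∩ I.proj t).Nonempty ∧
        BinAbsorbs 𝔸 (S₀ ∩ I.proj t) R₀) ∧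
        C = ⟨Finset.univ.image t, { c : V → A | (c ∘ t) ∈ S₀ }⟩ := by
    intro C hC
    rw [hI'] at hC
    rcases List.mem_append.mp hC with h | h
    · exact Or.inl h
    · right
      obtain ⟨t, ht, rfl⟩ := List.mem_map.mp h
      rw [Finset.mem_toList, Finset.mem_filter] at ht
      exact ⟨t, ht.2, rfl⟩
  have hPC := hmin.2.2
  have hexC : ∀ (q : ℕ), q ≤ m → ∀ s : Fin q → V, ∃ C ∈ I.constraints,
      ∀ j, s j ∈ C.scope := by
    intro q hq s
    have hcard : (Finset.univ.image s).card ≤ m := by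
      refine le_trans ?_ hq
      simpa using Finset.card_image_le (s := (Finset.univ : Finset (Fin q))) (f := s)
    obtain ⟨C, hC, hs⟩ := hmin.2.1 (Finset.univ.image s) hcard
    exact ⟨C, hC, fun j => hs (Finset.mem_image_of_mem s (Finset.mem_univ j))⟩
  have hIproj : ∀ (q : ℕ), q ≤ m → ∀ t : Fin q → V, ∀ C' ∈ I.constraints,
      (∀ j, t j ∈ C'.scope) → I.proj t = C'.proj t := by
    intro q hq t C' hC' hts
    ext a
    constructor
    · rintro ⟨C'', hC'', hts'', ha⟩
      rwa [hPC q hq t C'' hC'' C' hC' hts'' hts] at ha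
    · intro ha
      exact ⟨C', hC', hts, ha⟩
  -- per-position ambient and starting relations
  have hdata : ∀ i : Fin I'.constraints.length, ∃ Amb X0 : Set (V → A),
      X0 ⊆ (I'.constraints.get i).maps ∧ X0 ⊆ Amb ∧ X0.Nonempty ∧
      (∀ α : Equiv.Perm A, IsAutomorphismS 𝔸 α → ∀ g ∈ X0, (⇑α ∘ g) ∈ X0) ∧
      (∀ a ∈ Amb, ∀ x ∈ X0,
        (fun v => f₀ (a v) (x v)) ∈ X0 ∧ (fun v => f₀ (x v) (a v)) ∈ X0) ∧
      (∀ (q : ℕ), q ≤ m → ∀ s : Fin q → V, (∀ j, s j ∈ (I'.constraints.get i).scope) →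
        ∀ C0 ∈ I.constraints, (∀ j, s j ∈ C0.scope) →
        (fun g : V → A => g ∘ s) '' Amb = C0.proj s) := by
    intro i
    have hmem : I'.constraints.get i ∈ I'.constraints := List.get_mem _ _
    rcases hclass _ hmem with hC | ⟨t, hGood, hCt⟩
    · refine ⟨(I'.constraints.get i).maps, (I'.constraints.get i).maps, subset_rfl, subset_rfl,
        hnt _ hC, ?_, ?_, ?_⟩
      · intro α hα g hg
        exact hCa _ hC α hα g hg
      · intro a ha x hx
        exact ⟨hf₀pres _ hC a ha x hx, hf₀pres _ hC x hx a ha⟩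
      · intro q hq s hs C0 hC0 hs0
        exact hPC q hq s _ hC _ hC0 hs hs0
    · obtain ⟨htR, htNe, -⟩ := hGood
      obtain ⟨C', hC', htC'⟩ := hexC k hkm t
      have hproj' : I.proj t = C'.proj t := hIproj k hkm t C' hC' htC'
      refine ⟨{c : V → A | c ∘ t ∈ I.proj t}, {c : V → A | c ∘ t ∈ S₀ ∩ I.proj t},
        ?_, ?_, ?_, ?_, ?_, ?_⟩
      · rw [hCt]
        intro c hc
        exact hc.1
      · intro c hc
        exact hc.2
      · obtain ⟨a, haS, haP⟩ := htNe
        obtain ⟨g, hg, hgt⟩ := hproj' ▸ haP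
        refine ⟨g, ?_⟩
        show g ∘ t ∈ S₀ ∩ I.proj t
        have hgt' : g ∘ t = a := hgt
        rw [hgt']
        exact ⟨haS, haP⟩
      · intro α hα c hc
        obtain ⟨hcS, hcP⟩ := hc
        obtain ⟨g, hg, hgt⟩ := hproj' ▸ hcP
        constructor
        · show (⇑α ∘ c) ∘ t ∈ S₀
          exact hS₀a α hα _ hcS
        · show (⇑α ∘ c) ∘ t ∈ I.proj t
          rw [hproj']
          refine ⟨⇑α ∘ g, hCa C' hC' α hα g hg, ?_⟩
          show (⇑α ∘ g) ∘ t = (⇑α ∘ c) ∘ t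
          funext j
          exact congrArg α (congrFun hgt j)
      · intro a ha x hx
        obtain ⟨hxS, hxP⟩ := hx
        have haR : a ∘ t ∈ R₀ := htR ha
        have hP : ∀ y z : V → A, y ∘ t ∈ I.proj t → z ∘ t ∈ I.proj t →
            (fun v => f₀ (y v) (z v)) ∘ t ∈ I.proj t := by
          intro y z hy hz
          rw [hproj'] at hy hz ⊢
          obtain ⟨gy, hgy, hgyt⟩ := hy
          obtain ⟨gz, hgz, hgzt⟩ := hz
          refine ⟨fun v => f₀ (gy v) (gz v), hf₀pres C' hC' gy hgy gz hgz, ?_⟩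
          funext j
          have e1 : gy (t j) = y (t j) := congrFun hgyt j
          have e2 : gz (t j) = z (t j) := congrFun hgzt j
          show f₀ (gy (t j)) (gz (t j)) = f₀ (y (t j)) (z (t j))
          rw [e1, e2]
        exact ⟨⟨(hf₀abs (a ∘ t) haR (x ∘ t) hxS).1, hP a x ha hxP⟩,
          ⟨(hf₀abs (a ∘ t) haR (x ∘ t) hxS).2, hP x a hxP ha⟩⟩
      · intro q hq s hs C0 hC0 hs0
        rw [hCt] at hs
        choose σ hσmem hσ using fun j => Finset.mem_image.mp (hs j)
        have hsC' : ∀ j, s j ∈ C'.scope := fun j => by rw [← hσ j]; exact htC' (σ j)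
        have hprojs : C'.proj s = C0.proj s := hPC q hq s C' hC' C0 hC0 hsC' hs0
        ext a
        constructor
        · rintro ⟨g, hg, rfl⟩
          obtain ⟨h, hh, hht⟩ := hproj' ▸ hg
          rw [← hprojs]
          refine ⟨h, hh, ?_⟩
          funext j
          have e1 : h (t (σ j)) = g (t (σ j)) := congrFun hht (σ j)
          show h (s j) = g (s j)
          rw [← hσ j]
          exact e1
        · intro ha
          rw [← hprojs] at ha
          obtain ⟨h, hh, rfl⟩ := ha
          refine ⟨h, ?_, rfl⟩
          show h ∘ t ∈ I.proj t
          rw [hproj']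
          exact ⟨h, hh, rfl⟩
  choose Amb X0 hX0sub hX0A hX0ne hX0aut hX0abs hAmb6 using hdata
  have hGrefl : IsAutomorphismS 𝔸 (Equiv.refl A) := fun i t => Iff.rfl
  -- oligomorphicity transferred to assignments on `V`
  have horb : {O : Set (V → A) | ∃ g : V → A,
      O = {h | ∃ α : Equiv.Perm A, IsAutomorphismS 𝔸 α ∧ ⇑α ∘ g = h}}.Finite := by
    set e : V ≃ Fin (Fintype.card V) := Fintype.equivFin V
    have hinj : Function.Injective (fun g : V → A => g ∘ ⇑e.symm) := by
      intro g₁ g₂ hg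
      funext v
      have := congrFun hg (e v)
      simpa using this
    have hsub2 : (fun O : Set (V → A) => (fun g : V → A => g ∘ ⇑e.symm) '' O) ''
        {O : Set (V → A) | ∃ g : V → A,
          O = {h | ∃ α : Equiv.Perm A, IsAutomorphismS 𝔸 α ∧ ⇑α ∘ g = h}} ⊆
        {O : Set (Fin (Fintype.card V) → A) | ∃ t : Fin (Fintype.card V) → A,
          O = {s | ∃ α : Equiv.Perm A, IsAutomorphismS 𝔸 α ∧ ⇑α ∘ t = s}} := by
      rintro - ⟨O, ⟨g, rfl⟩, rfl⟩
      refine ⟨g ∘ ⇑e.symm, ?_⟩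
      ext s
      constructor
      · rintro ⟨h, ⟨α, hα, rfl⟩, rfl⟩
        exact ⟨α, hα, rfl⟩
      · rintro ⟨α, hα, rfl⟩
        exact ⟨⇑α ∘ g, ⟨α, hα, rfl⟩, rfl⟩
    exact Set.Finite.of_finite_image ((holig (Fintype.card V)).subset hsub2) ((Set.image_injective.mpr hinj).injOn)
  obtain ⟨X, hXsub, hXne, hXcons⟩ := absorb_fixpoint m
    (fun i : Fin I'.constraints.length => (I'.constraints.get i).scope)
    Amb X0 f₀ (IsAutomorphismS 𝔸) hGrefl horb hX0A hX0ne hX0aut hX0abs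
    (by
      intro q hq s i i' h1 h2
      obtain ⟨C0, hC0, hs0⟩ := hexC q hq s
      rw [hAmb6 i q hq s h1 C0 hC0 hs0, hAmb6 i' q hq s h2 C0 hC0 hs0])
  refine ⟨⟨(List.finRange I'.constraints.length).map
    (fun i => ⟨(I'.constraints.get i).scope, X i⟩)⟩, ?_, ?_, ?_⟩
  · intro C hC
    obtain ⟨i, -, rfl⟩ := List.mem_map.mp hC
    exact hXne i
  · rw [Refines, List.forall₂_iff_get]
    constructor
    · simp
    · intro j h₁ h₂
      simp only [List.get_eq_getElem, List.getElem_map, List.getElem_finRange]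
      exact ⟨rfl, (hXsub _).trans (hX0sub _)⟩
  · intro q hq s C hC C' hC' h1 h2
    obtain ⟨i, -, rfl⟩ := List.mem_map.mp hC
    obtain ⟨i', -, rfl⟩ := List.mem_map.mp hC'
    exact hXcons q hq s i i' h1 h2

/-- adding, for every `k`-tuple of variables on which `S₀` absorbs, the
constraint forcing the tuple into `S₀` keeps a non-trivial `(m,n)`-minimal instance
non-trivially `(m,n)`-minimalisable. -/
theorem statement6 {A : Type*} [Countable A] (𝔸 : RelStruct A) (holig : OligomorphicS 𝔸)
    {k m n : ℕ} (hk : 1 ≤ k) (hkm : k ≤ m) (hmn : m ≤ n)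
    (S₀ R₀ : Set (Fin k → A)) (hsub : S₀ ⊆ R₀)
    (hS₀a : AutInvariantRel 𝔸 S₀) (hS₀p : PolInvariantRel 𝔸 S₀)
    (hR₀a : AutInvariantRel 𝔸 R₀) (hR₀p : PolInvariantRel 𝔸 R₀)
    (habs : BinAbsorbs 𝔸 S₀ R₀)
    {V : Type*} [Fintype V] (I : CSPInstance V A)
    (hnt : I.NonTrivial) (hmin : MNMinimal m n I)
    (hCa : ∀ C ∈ I.constraints, ConstraintAutInvS 𝔸 C)
    (hCp : ∀ C ∈ I.constraints, ConstraintPolInv 𝔸 C) :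
    (∃ J : CSPInstance V A, J.NonTrivial ∧ MNMinimal m n J ∧
      ∀ D ∈ J.constraints, ∃ C ∈ (addAbsorbConstraints I S₀ R₀ 𝔸).constraints,
        D.scope = C.scope ∧ D.maps ⊆ C.maps) ∧
    ∀ K : CSPInstance V A,
      IsMNMinimalEquiv m K (addAbsorbConstraints I S₀ R₀ 𝔸) → K.NonTrivial := by
  obtain ⟨L, hLnt, hLref, hLpc⟩ :=
    exists_refinement 𝔸 holig hkm S₀ R₀ hS₀a habs I hnt hmin hCa hCp
  constructor
  · refine ⟨I, hnt, hmin, ?_⟩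
    intro D hD
    exact ⟨D, List.mem_append_left _ hD, rfl, subset_rfl⟩
  · rintro K ⟨hKref, hKpc, hKmax⟩
    have hLK := hKmax L hLref hLpc
    intro D hD
    rw [List.mem_iff_get] at hD
    obtain ⟨j, rfl⟩ := hD
    have hlen : L.constraints.length = K.constraints.length := hLK.length_eq
    have hj₁ : (j : ℕ) < L.constraints.length := by rw [hlen]; exact j.isLt
    have hR := (List.forall₂_iff_get.mp hLK).2 (j : ℕ) hj₁ j.isLt
    exact Set.Nonempty.mono hR.2 (hLnt _ (List.get_mem _ _))
end

section
/- Let A be an infinite set, let 𝓘 = (V,𝒞) be a CSP instance over A with V finite, and let f : A^k → A be injective as a function of k-tuples (f(a₁,…,a_k) = f(b₁,…,b_k) implies aᵢ = bᵢ for all i) and preserve every constraint of 𝓘. Then the solution set of 𝓘_eq is preserved by f: if g₁,…,g_k : V → A are solutions of 𝓘_eq, then so is the map v ↦ f(g₁(v),…,g_k(v)). -/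
open scoped Classical

/-- the solution set of `I_eq` is preserved by any injective operation that
preserves every constraint of `I`. -/
theorem statement8 {A : Type*} [Infinite A] {V : Type*} (I : CSPInstance V A)
    {k : ℕ} (f : (Fin k → A) → A) (hinj : Function.Injective f)
    (hpres : ∀ C ∈ I.constraints, PreservesK f C.maps)
    (g : Fin k → (V → A)) (hg : ∀ j, (I.eqClosure).IsSolution (g j)) :
    (I.eqClosure).IsSolution (fun v => f (fun j => g j v)) := by
  intro C' hC'
  simp only [CSPInstance.eqClosure, List.mem_map] at hC'
  obtain ⟨C, hC, rfl⟩ := hC'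
  have hgj : ∀ j, ∃ h ∈ C.maps, ∃ α : Equiv.Perm A, ∀ x ∈ C.scope, g j x = α (h x) := by
    intro j
    obtain ⟨p, hp, hpx⟩ := hg j _ (by
      simp only [CSPInstance.eqClosure, List.mem_map]
      exact ⟨C, hC, rfl⟩)
    obtain ⟨h, hh, α, rfl⟩ := hp
    exact ⟨h, hh, α, fun x hx => hpx x hx⟩
  choose h hh α hα using hgj
  set σ : Equiv.Perm (Fin k → A) := Equiv.piCongrRight (fun j => α j) with hσ
  set β : Equiv.Perm A := σ.extendDomain (Equiv.ofInjective f hinj) with hβ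
  have hkey : ∀ x : Fin k → A, β (f x) = f (fun j => α j (x j)) := by
    intro x
    have := σ.extendDomain_apply_image (Equiv.ofInjective f hinj) x
    exact this
  have hF0 : (fun v => f (fun j => h j v)) ∈ C.maps := hpres C hC h hh
  refine ⟨⇑β ∘ (fun v => f (fun j => h j v)), ⟨_, hF0, β, rfl⟩, ?_⟩
  intro x hx
  have : (fun j => g j x) = fun j => α j (h j x) := funext fun j => hα j x hx
  simp only [Function.comp_apply, hkey, this]
end

section
/- Let 𝓘 = (V,𝒞) be an ℓ-minimal, non-trivial CSP instance over H whose constraints are all preserved by p₁ and such that proj_{(u,v)}(𝓘) ∩ I₂ ≠ ∅ for all distinct u,v ∈ V. Then for every v ∈ [V]^ℓ and every injective Aut(ℍ)-orbit O ⊆ proj_v(𝓘), every injective mapping f : V → H is a solution of the instance (𝓘^{v∈O})_eq. -/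
open scoped Classical

section Aux

variable {H : Type*}

/-- Extend an injective map on a finite set of a countably infinite type to a permutation. -/
lemma aux_exists_perm_extend [Countable H] [Infinite H] (s : Set H) (hs : s.Finite)
    (e : H → H) (he : Set.InjOn e s) :
    ∃ α : Equiv.Perm H, ∀ x ∈ s, α x = e x := by
  classical
  have hs' : (e '' s).Finite := hs.image e
  have h1 : Infinite (↥sᶜ) := (hs.infinite_compl).to_subtype
  have h2 : Infinite (↥(e '' s)ᶜ) := (hs'.infinite_compl).to_subtype
  have h3 : Countable (↥sᶜ) := Subtype.countable
  have h4 : Countable (↥(e '' s)ᶜ) := Subtype.countable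
  obtain ⟨e₂⟩ : Nonempty (↥sᶜ ≃ ↥(e '' s)ᶜ) := nonempty_equiv_of_countable
  let e₁ : ↥s ≃ ↥(e '' s) := Equiv.Set.imageOfInjOn e s he
  refine ⟨((Equiv.Set.sumCompl s).symm.trans ((e₁.sumCongr e₂).trans
    (Equiv.Set.sumCompl (e '' s)))), ?_⟩
  intro x hx
  simp only [Equiv.trans_apply, Equiv.Set.sumCompl_symm_apply_of_mem hx,
    Equiv.sumCongr_apply, Sum.map_inl, Equiv.Set.sumCompl_apply_inl]
  rfl

lemma aux_exists_perm_comp {V : Type*} [Countable H] [Infinite H] (s : Set V)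
    (hs : s.Finite) (g f : V → H) (hg : Set.InjOn g s) (hf : Set.InjOn f s) :
    ∃ α : Equiv.Perm H, ∀ x ∈ s, α (g x) = f x := by
  classical
  set e : H → H := fun y => if h : ∃ x ∈ s, g x = y then f h.choose else y with he_def
  have hchoose : ∀ x ∈ s, e (g x) = f x := by
    intro x hx
    have h : ∃ x' ∈ s, g x' = g x := ⟨x, hx, rfl⟩
    have h1 := h.choose_spec
    have : h.choose = x := hg h1.1 hx h1.2
    simp only [e, dif_pos h]
    rw [this]
  have he : Set.InjOn e (g '' s) := by
    rintro y₁ ⟨x₁, hx₁, rfl⟩ y₂ ⟨x₂, hx₂, rfl⟩ hy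
    rw [hchoose x₁ hx₁, hchoose x₂ hx₂] at hy
    rw [hg.eq_iff hx₁ hx₂]
    exact hf hx₁ hx₂ hy
  obtain ⟨α, hα⟩ := aux_exists_perm_extend (g '' s) (hs.image g) e he
  exact ⟨α, fun x hx => by rw [hα (g x) ⟨x, hx, rfl⟩, hchoose x hx]⟩

variable {ℓ : ℕ} {R : Set (Fin ℓ → H)}

lemma aux_mem_orbit_self {q : ℕ} (a : Fin q → H) : a ∈ orbitOf R a :=
  ⟨Equiv.refl H, fun t => by simp, by ext i; simp⟩

lemma aux_orbit_trans {q : ℕ} {a b c : Fin q → H} (hb : b ∈ orbitOf R a)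
    (hc : c ∈ orbitOf R b) : c ∈ orbitOf R a := by
  obtain ⟨α, hα, rfl⟩ := hb
  obtain ⟨β, hβ, rfl⟩ := hc
  refine ⟨α.trans β, fun u => ?_, rfl⟩
  have := hβ (⇑α ∘ u)
  have h2 := hα u
  exact this.trans h2

lemma aux_orbit_inj {q : ℕ} {a b : Fin q → H} (ha : Function.Injective a)
    (hb : b ∈ orbitOf R a) : Function.Injective b := by
  obtain ⟨α, hα, rfl⟩ := hb
  exact α.injective.comp ha

end Aux

/-- for an `ℓ`-minimal non-trivial instance whose constraints are preserved by
the binary injection `p₁` and whose binary projections meet the injective pairs, every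
injective mapping is a solution of `(I^{t ∈ O})_eq` for every injective orbit
`O ⊆ proj_t(I)`. -/
theorem statement9 {H : Type*} [LinearOrder H] {ℓ : ℕ} {R : Set (Fin ℓ → H)}
    {p₁ : H → H → H}
    (hl : 3 ≤ ℓ) (hcount : Countable H) (hinf : Infinite H)
    (hRinj : ∀ a ∈ R, Function.Injective a)
    (hRsymm : ∀ σ : Equiv.Perm (Fin ℓ), ∀ a ∈ R, (a ∘ ⇑σ) ∈ R)
    (hEne : (ESet R).Nonempty) (hNne : (NSet R).Nonempty)
    (horbE : ∀ a b : Fin ℓ → H, a ∈ ESet R → b ∈ ESet R → b ∈ orbitOf R a)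
    (horbN : ∀ a b : Fin ℓ → H, a ∈ NSet R → b ∈ NSet R → b ∈ orbitOf R a)
    (hp₁inj : Function.Injective (fun x : H × H => p₁ x.1 x.2))
    (hp₁can : Canonical2 R p₁)
    (hp₁proj : ∀ a b : Fin ℓ → H, Function.Injective a → Function.Injective b →
      (fun i => p₁ (a i) (b i)) ∈ orbitOf R a)
    {V : Type*} [LinearOrder V] (I : CSPInstance V H)
    (hmin : LMinimal ℓ I) (hnt : I.NonTrivial)
    (hpres : ∀ C ∈ I.constraints, Preserves2 p₁ C.maps)
    (hbin : ∀ u v : V, u ≠ v → ∃ t ∈ I.proj ![u, v], t 0 ≠ t 1)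
    (t : Fin ℓ → V) (ht : StrictMono t) (O : Set (Fin ℓ → H))
    (hO : ∃ a : Fin ℓ → H, Function.Injective a ∧ O = orbitOf R a)
    (hOsub : O ⊆ I.proj t)
    (f : V → H) (hf : Function.Injective f) :
    ((I.restrictTuple t O).eqClosure).IsSolution f := by
  classical
  haveI := hcount; haveI := hinf
  -- Every constraint contains an assignment injective on its scope.
  have hexistsInj : ∀ C ∈ I.constraints, ∃ g ∈ C.maps, Set.InjOn g ↑C.scope := by
    intro C hC
    obtain ⟨g₀, hg₀⟩ := hnt C hC
    set P : (V → H) → Finset (V × V) := fun g =>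
      (C.scope ×ˢ C.scope).filter (fun p => p.1 ≠ p.2 ∧ g p.1 = g p.2) with hP
    have hPinj : ∀ g, P g = ∅ → Set.InjOn g ↑C.scope := by
      intro g hg x hx y hy hxy
      by_contra hne
      have : (x, y) ∈ P g := by
        simp only [hP, Finset.mem_filter, Finset.mem_product]
        exact ⟨⟨hx, hy⟩, hne, hxy⟩
      rw [hg] at this
      exact absurd this (Finset.notMem_empty _)
    suffices key : ∀ n : ℕ, ∀ g ∈ C.maps, (P g).card ≤ n →
        ∃ g' ∈ C.maps, Set.InjOn g' ↑C.scope from key (P g₀).card g₀ hg₀ le_rfl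
    intro n
    induction n with
    | zero =>
      intro g hg hcard
      exact ⟨g, hg, hPinj g (Finset.card_eq_zero.mp (Nat.le_zero.mp hcard))⟩
    | succ n ih =>
      intro g hg hcard
      rcases (P g).eq_empty_or_nonempty with hemp | ⟨⟨u, v⟩, hmem⟩
      · exact ⟨g, hg, hPinj g hemp⟩
      · have hmem' := hmem
        simp only [hP, Finset.mem_filter, Finset.mem_product] at hmem'
        obtain ⟨⟨hu, hv⟩, hne, heq⟩ := hmem'
        obtain ⟨t', ht'mem, ht'ne⟩ := hbin u v hne
        obtain ⟨C'', hC'', hsc'', hproj''⟩ := ht'mem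
        have hCsc : ∀ i, (![u, v] : Fin 2 → V) i ∈ C.scope := by
          intro i; fin_cases i <;> simpa
        have hle2 : (2 : ℕ) ≤ ℓ := by omega
        rw [hmin.2 2 hle2 ![u, v] C'' hC'' C hC hsc'' hCsc] at hproj''
        obtain ⟨h, hh, hht⟩ := hproj''
        have hhu : h u ≠ h v := by
          have h0 : h u = t' 0 := by rw [← hht]; simp
          have h1 : h v = t' 1 := by rw [← hht]; simp
          rw [h0, h1]; exact ht'ne
        set g' := fun x => p₁ (h x) (g x) with hg'def
        have hg'mem : g' ∈ C.maps := hpres C hC h hh g hg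
        have hsub : P g' ⊆ P g := by
          intro p hp
          simp only [hP, Finset.mem_filter] at hp ⊢
          obtain ⟨hmemp, hnep, heqp⟩ := hp
          refine ⟨hmemp, hnep, ?_⟩
          have := hp₁inj (show (fun x : H × H => p₁ x.1 x.2) (h p.1, g p.1) =
            (fun x : H × H => p₁ x.1 x.2) (h p.2, g p.2) from heqp)
          exact (Prod.ext_iff.mp this).2
        have hnotmem : (u, v) ∉ P g' := by
          intro hmem''
          simp only [hP, Finset.mem_filter] at hmem''
          have := hp₁inj (show (fun x : H × H => p₁ x.1 x.2) (h u, g u) =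
            (fun x : H × H => p₁ x.1 x.2) (h v, g v) from hmem''.2.2)
          exact hhu (Prod.ext_iff.mp this).1
        have hss : P g' ⊂ P g := ⟨hsub, fun hsup => hnotmem (hsup hmem)⟩
        have hlt : (P g').card < (P g).card := Finset.card_lt_card hss
        exact ih g' hg'mem (by omega)
  obtain ⟨a, hainj, hOeq⟩ := hO
  subst hOeq
  have haO : a ∈ orbitOf R a := aux_mem_orbit_self a
  intro D hD
  simp only [CSPInstance.eqClosure, CSPInstance.restrictTuple, List.map_map,
    List.mem_map, Function.comp_apply] at hD
  obtain ⟨C, hC, rfl⟩ := hD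
  obtain ⟨g₀, hg₀, hg₀inj⟩ := hexistsInj C hC
  by_cases hts : ∀ i, t i ∈ C.scope
  · rw [if_pos hts]
    -- find h ∈ C.maps with h ∘ t = a
    obtain ⟨C₀, hC₀, hsc₀, hproj₀⟩ := hOsub haO
    rw [hmin.2 ℓ le_rfl t C₀ hC₀ C hC hsc₀ hts] at hproj₀
    obtain ⟨h, hh, hht⟩ := hproj₀
    have hht' : h ∘ t = a := hht
    set f' := fun x => p₁ (h x) (g₀ x) with hf'def
    have hf'mem : f' ∈ C.maps := hpres C hC h hh g₀ hg₀
    have hhtinj : Function.Injective (h ∘ t) := by rw [hht']; exact hainj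
    have hg₀tinj : Function.Injective (g₀ ∘ t) := by
      intro i j hij
      exact ht.injective (hg₀inj (Finset.mem_coe.mpr (hts i)) (Finset.mem_coe.mpr (hts j)) hij)
    have hf't : (f' ∘ t) ∈ orbitOf R a := by
      have horb := hp₁proj (h ∘ t) (g₀ ∘ t) hhtinj hg₀tinj
      have heqo : orbitOf R (h ∘ t) = orbitOf R a := by rw [hht']
      rw [heqo] at horb
      exact horb
    have hf'inj : Set.InjOn f' ↑C.scope := by
      intro x hx y hy hxy
      have := hp₁inj (show (fun x : H × H => p₁ x.1 x.2) (h x, g₀ x) =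
        (fun x : H × H => p₁ x.1 x.2) (h y, g₀ y) from hxy)
      exact hg₀inj hx hy (Prod.ext_iff.mp this).2
    obtain ⟨α, hα⟩ := aux_exists_perm_comp (↑C.scope) C.scope.finite_toSet f' f
      hf'inj hf.injOn
    refine ⟨⇑α ∘ f', ⟨f', ⟨hf'mem, hf't⟩, α, rfl⟩, ?_⟩
    intro x hx
    exact (hα x hx).symm
  · rw [if_neg hts]
    obtain ⟨α, hα⟩ := aux_exists_perm_comp (↑C.scope) C.scope.finite_toSet g₀ f
      hg₀inj hf.injOn
    refine ⟨⇑α ∘ g₀, ⟨g₀, hg₀, α, rfl⟩, ?_⟩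
    intro x hx
    exact (hα x hx).symm
end
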